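/- arXiv:1108.5104 — 5 statements merged into one kernel-verified Lean document; each statement's English description precedes it below -/
import Mathlib

section
/- (Johnson bound, first form) For all positive integers n, d, w with 1 ≤ w ≤ n, A(n,d,w) ≤ ⌊(n/w) · A(n−1, d, w−1)⌋. -/
/-- The number of ones of a binary vector. -/
def wtOnes {n : ℕ} (u : Fin n → ZMod 2) : ℕ :=
  (Finset.univ.filter (fun t => u t = 1)).card

/-- `C` is an `(n,d,w)` constant-weight binary code. -/
def IsCWCode (n d w : ℕ) (C : Finset (Fin n → ZMod 2)) : Prop :=
  (∀ c ∈ C, wtOnes c = w) ∧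
  ∀ u ∈ C, ∀ v ∈ C, u ≠ v → d ≤ hammingDist u v

/-- `A n d w`: the largest possible size of an `(n,d,w)` constant-weight code. -/
noncomputable def A (n d w : ℕ) : ℕ :=
  sSup {M | ∃ C : Finset (Fin n → ZMod 2), IsCWCode n d w C ∧ C.card = M}

/-- `C` is a `(w1,n1,w2,n2,d)` doubly-constant-weight binary code. -/
def IsDCWCode (w1 n1 w2 n2 d : ℕ) (C : Finset (Fin n1 ⊕ Fin n2 → ZMod 2)) : Prop :=
  (∀ c ∈ C,
    (Finset.univ.filter (fun t : Fin n1 => c (Sum.inl t) = 1)).card = w1 ∧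
    (Finset.univ.filter (fun t : Fin n2 => c (Sum.inr t) = 1)).card = w2) ∧
  ∀ u ∈ C, ∀ v ∈ C, u ≠ v → d ≤ hammingDist u v

/-- `T w1 n1 w2 n2 d`: the largest possible size of a `(w1,n1,w2,n2,d)`
doubly-constant-weight code. -/
noncomputable def T (w1 n1 w2 n2 d : ℕ) : ℕ :=
  sSup {M | ∃ C : Finset (Fin n1 ⊕ Fin n2 → ZMod 2), IsDCWCode w1 n1 w2 n2 d C ∧ C.card = M}

/-- `S_i(c)`: the set of codewords of `C` at distance `i` from `c`. -/
def Sdist {n : ℕ} (C : Finset (Fin n → ZMod 2)) (c : Fin n → ZMod 2) (i : ℕ) :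
    Finset (Fin n → ZMod 2) :=
  C.filter (fun u => hammingDist u c = i)

/-- The distance distribution `A_i = (1/|C|) ∑_{c ∈ C} |S_i(c)|` of a code `C`. -/
noncomputable def distDistr {n : ℕ} (C : Finset (Fin n → ZMod 2)) (i : ℕ) : ℚ :=
  (∑ c ∈ C, ((Sdist C c i).card : ℚ)) / (C.card : ℚ)

/-- `V_i`: vectors of `F^n` with exactly `i` ones on the first `w` coordinates and
exactly `i` ones on the last `n - w` coordinates. -/
def Vset (n w i : ℕ) : Finset (Fin n → ZMod 2) :=
  Finset.univ.filter (fun u =>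
    (Finset.univ.filter (fun t : Fin n => t.val < w ∧ u t = 1)).card = i ∧
    (Finset.univ.filter (fun t : Fin n => w ≤ t.val ∧ u t = 1)).card = i)

/-- `m_{i,j} = max { d(u,v) : u ∈ V_i, v ∈ V_j }`. -/
def mMax (n w i j : ℕ) : ℕ :=
  ((Vset n w i) ×ˢ (Vset n w j)).sup fun p => hammingDist p.1 p.2

/-- `P⁻_k(n;x) = ∑_{j odd} C(x,j) C(n-x,k-j)`. -/
def Pminus (k n x : ℕ) : ℕ :=
  ∑ j ∈ Finset.range (k + 1), if Odd j then x.choose j * (n - x).choose (k - j) else 0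

/-- `P⁺_k(n;x) = ∑_{j even} C(x,j) C(n-x,k-j)`. -/
def Pplus (k n x : ℕ) : ℕ :=
  ∑ j ∈ Finset.range (k + 1), if Even j then x.choose j * (n - x).choose (k - j) else 0

/-- The Krawtchouk polynomial `P_k(n;x) = ∑_j (-1)^j C(x,j) C(n-x,k-j)` at integer points. -/
def Kraw (k n x : ℕ) : ℤ :=
  ∑ j ∈ Finset.range (k + 1), (-1 : ℤ) ^ j * x.choose j * (n - x).choose (k - j)

lemma wt_split {m : ℕ} (c : Fin (m+1) → ZMod 2) (i : Fin (m+1)) (h : c i = 1) :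
    wtOnes c = 1 + wtOnes (fun t : Fin m => c (i.succAbove t)) := by
  unfold wtOnes
  rw [Finset.card_filter, Finset.card_filter,
    Fin.sum_univ_succAbove (fun j => if c j = 1 then 1 else 0) i]
  simp [h]

lemma dist_split {m : ℕ} (u v : Fin (m+1) → ZMod 2) (i : Fin (m+1))
    (hu : u i = 1) (hv : v i = 1) :
    hammingDist u v
      = hammingDist (fun t : Fin m => u (i.succAbove t)) (fun t : Fin m => v (i.succAbove t)) := by
  unfold hammingDist
  rw [Finset.card_filter, Finset.card_filter,
    Fin.sum_univ_succAbove (fun j => if u j ≠ v j then 1 else 0) i]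
  simp [hu, hv]

lemma bddA (n d w : ℕ) :
    BddAbove {M | ∃ C : Finset (Fin n → ZMod 2), IsCWCode n d w C ∧ C.card = M} := by
  refine ⟨Fintype.card (Fin n → ZMod 2), ?_⟩
  rintro M ⟨C, _, rfl⟩
  exact Finset.card_le_univ C

lemma johnson_aux {m d w : ℕ} (hw : 1 ≤ w) (C : Finset (Fin (m+1) → ZMod 2))
    (hC : IsCWCode (m+1) d w C) : C.card * w ≤ (m+1) * A m d (w-1) := by
  have key : ∀ i : Fin (m+1), (C.filter (fun c => c i = 1)).card ≤ A m d (w-1) := by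
    intro i
    set f : (Fin (m+1) → ZMod 2) → (Fin m → ZMod 2) :=
      fun c t => c (i.succAbove t) with hf
    set D := (C.filter (fun c => c i = 1)).image f with hD
    have hinj : Set.InjOn f (C.filter (fun c => c i = 1)) := by
      intro u hu v hv h
      rw [Finset.mem_coe, Finset.mem_filter] at hu hv
      funext j
      rcases eq_or_ne j i with rfl | hne
      · rw [hu.2, hv.2]
      · obtain ⟨t, ht⟩ := Fin.exists_succAbove_eq hne
        have := congrFun h t
        simpa [hf, ht] using this
    have hcard : D.card = (C.filter (fun c => c i = 1)).card :=
      Finset.card_image_of_injOn hinj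
    have hcode : IsCWCode m d (w-1) D := by
      constructor
      · intro c' hc'
        obtain ⟨c, hc, rfl⟩ := Finset.mem_image.1 hc'
        rw [Finset.mem_filter] at hc
        have hw1 : wtOnes c = w := hC.1 c hc.1
        have hsplit : wtOnes c = 1 + wtOnes (f c) := wt_split c i hc.2
        exact Nat.eq_sub_of_add_eq' (hsplit ▸ hw1)
      · intro u' hu' v' hv' hne
        obtain ⟨u, hu, rfl⟩ := Finset.mem_image.1 hu'
        obtain ⟨v, hv, rfl⟩ := Finset.mem_image.1 hv'
        rw [Finset.mem_filter] at hu hv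
        have huv : u ≠ v := fun h => hne (by rw [h])
        have hdist : hammingDist u v = hammingDist (f u) (f v) :=
          dist_split u v i hu.2 hv.2
        exact hdist ▸ hC.2 u hu.1 v hv.1 huv
    have hmem : D.card ∈ {M | ∃ C : Finset (Fin m → ZMod 2),
        IsCWCode m d (w-1) C ∧ C.card = M} := ⟨D, hcode, rfl⟩
    calc (C.filter (fun c => c i = 1)).card = D.card := hcard.symm
      _ ≤ A m d (w-1) := le_csSup (bddA m d (w-1)) hmem
  have h1 : C.card * w = ∑ c ∈ C, wtOnes c := by
    rw [Finset.sum_congr rfl (fun c hc => hC.1 c hc), Finset.sum_const, smul_eq_mul]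
  have h2 : (∑ c ∈ C, wtOnes c) =
      ∑ i : Fin (m+1), (C.filter (fun c => c i = 1)).card := by
    simp only [wtOnes, Finset.card_filter]
    rw [Finset.sum_comm]
  calc C.card * w = ∑ i : Fin (m+1), (C.filter (fun c => c i = 1)).card := by
        rw [h1, h2]
    _ ≤ ∑ _i : Fin (m+1), A m d (w-1) := Finset.sum_le_sum (fun i _ => key i)
    _ = (m+1) * A m d (w-1) := by simp [mul_comm]

/-- Johnson bound, first form: For all positive integers `n, d, w`
with `1 ≤ w ≤ n`, `A(n,d,w) ≤ ⌊(n/w) · A(n-1,d,w-1)⌋`. -/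
theorem johnson_first (n d w : ℕ) (hn : 0 < n) (hd : 0 < d) (hw : 1 ≤ w)
    (hwn : w ≤ n) :
    A n d w ≤ n * A (n - 1) d (w - 1) / w := by
  obtain ⟨m, rfl⟩ := Nat.exists_eq_succ_of_ne_zero hn.ne'
  have hne : {M | ∃ C : Finset (Fin (m+1) → ZMod 2),
      IsCWCode (m+1) d w C ∧ C.card = M}.Nonempty :=
    ⟨0, ∅, ⟨by simp, by simp⟩, by simp⟩
  refine csSup_le hne ?_
  rintro M ⟨C, hC, rfl⟩
  rw [Nat.le_div_iff_mul_le (by omega : 0 < w)]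
  simpa using johnson_aux hw C hC
end

section
/- Let C be a nonempty (n,d,w) constant-weight code with d even and d < 2w ≤ n. Then for every codeword c ∈ C and every integer i with d/2 ≤ i ≤ w, |S_{2i}(c)| ≤ T(i, w, i, n−w, d). -/
/-!
Flipping the coordinates of every `u ∈ S_{2i}(c)` on the support of `c` is the translation
`u ↦ u + c`, an isometry. Since `u` and `c` have the same weight and differ in `2i` places, `u`
has exactly `i` zeros on the support of `c` and `i` ones off it, so `u + c` has `i` ones on each
of the two blocks. Listing the support of `c` first turns the translates of `S_{2i}(c)` into a
`(i, w, i, n - w, d)` doubly-constant-weight code.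
-/

open Finset

theorem card_le_T_of_isDCWCode {w₁ n₁ w₂ n₂ d : ℕ} {D : Finset (Fin n₁ ⊕ Fin n₂ → ZMod 2)}
    (hD : IsDCWCode w₁ n₁ w₂ n₂ d D) : D.card ≤ T w₁ n₁ w₂ n₂ d :=
  le_csSup ⟨_, by rintro _ ⟨D', -, rfl⟩; exact card_le_univ D'⟩ ⟨D, hD, rfl⟩

theorem hammingDist_comp_equiv {α β γ : Type*} [Fintype α] [Fintype β] [DecidableEq γ]
    (e : α ≃ β) (f g : β → γ) : hammingDist (f ∘ e) (g ∘ e) = hammingDist f g :=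
  card_equiv e (by simp)

theorem card_filter_comp_equiv_subtype {α β : Type*} [Fintype α] [Fintype β] {p q : α → Prop}
    [DecidablePred p] [DecidablePred q] (e : β ≃ {a // p a}) :
    #{b | q (e b)} = #{a | p a ∧ q a} := by
  rw [← Fintype.card_subtype, ← Fintype.card_subtype]
  exact Fintype.card_congr
    ((e.subtypeEquiv fun _ => Iff.rfl).trans (Equiv.subtypeSubtypeEquivSubtypeInter p q))

section Binary

variable {ι : Type*} [Fintype ι]

theorem hammingDist_eq_card_add_card (u c : ι → ZMod 2) :
    hammingDist u c = #{t | c t = 1 ∧ u t = 0} + #{t | c t = 0 ∧ u t = 1} := by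
  simp only [hammingDist, card_filter, ← sum_add_distrib]
  refine sum_congr rfl fun t _ => ?_
  generalize u t = x; generalize c t = y
  revert x y; decide

theorem card_ones_add_card_eq (u c : ι → ZMod 2) :
    #{t | u t = 1} + #{t | c t = 1 ∧ u t = 0} = #{t | c t = 1} + #{t | c t = 0 ∧ u t = 1} := by
  simp only [card_filter, ← sum_add_distrib]
  refine sum_congr rfl fun t _ => ?_
  generalize u t = x; generalize c t = y
  revert x y; decide

theorem card_eq_of_hammingDist_eq_two_mul {u c : ι → ZMod 2} {i : ℕ}
    (hwt : #{t | u t = 1} = #{t | c t = 1}) (hdist : hammingDist u c = 2 * i) :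
    #{t | c t = 1 ∧ u t = 0} = i ∧ #{t | c t = 0 ∧ u t = 1} = i := by
  have := card_ones_add_card_eq u c
  rw [hammingDist_eq_card_add_card] at hdist
  omega

end Binary

def translateSplit {n w m : ℕ} {c : Fin n → ZMod 2} (e₁ : Fin w ≃ {t // c t = 1})
    (e₂ : Fin m ≃ {t // ¬ c t = 1}) (u : Fin n → ZMod 2) : Fin w ⊕ Fin m → ZMod 2 :=
  (u + c) ∘ (e₁.sumCongr e₂).trans (Equiv.sumCompl _)

theorem translateSplit_injective {n w m : ℕ} {c : Fin n → ZMod 2} (e₁ : Fin w ≃ {t // c t = 1})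
    (e₂ : Fin m ≃ {t // ¬ c t = 1}) : Function.Injective (translateSplit e₁ e₂) :=
  ((Equiv.surjective _).injective_comp_right).comp (add_left_injective c)

theorem isDCWCode_image_translateSplit {n d w m i : ℕ} {C : Finset (Fin n → ZMod 2)}
    (hcode : IsCWCode n d w C) {c : Fin n → ZMod 2} (hc : c ∈ C) (e₁ : Fin w ≃ {t // c t = 1})
    (e₂ : Fin m ≃ {t // ¬ c t = 1}) :
    IsDCWCode i w i m d ((Sdist C c (2 * i)).image (translateSplit e₁ e₂)) := by
  obtain ⟨hwt, hdist⟩ := hcode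
  refine ⟨?_, ?_⟩
  · simp only [forall_mem_image, Sdist, mem_filter, and_imp]
    intro u hu hud
    obtain ⟨hzeros, hones⟩ :=
      card_eq_of_hammingDist_eq_two_mul ((hwt u hu).trans (hwt c hc).symm) hud
    simp only [translateSplit, Function.comp_apply, Equiv.trans_apply, Equiv.sumCongr_apply,
      Sum.map_inl, Sum.map_inr, Equiv.sumCompl_apply_inl, Equiv.sumCompl_apply_inr, Pi.add_apply]
    rw [card_filter_comp_equiv_subtype (q := fun t => u t + c t = 1) e₁,
      card_filter_comp_equiv_subtype (q := fun t => u t + c t = 1) e₂]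
    refine ⟨(congrArg card (filter_congr fun t _ => ?_)).trans hzeros,
      (congrArg card (filter_congr fun t _ => ?_)).trans hones⟩ <;>
      generalize u t = x <;> generalize c t = y <;> revert x y <;> decide
  · simp only [forall_mem_image, Sdist, mem_filter]
    intro u ⟨hu, _⟩ v ⟨hv, _⟩ huv
    rw [translateSplit, translateSplit, hammingDist_comp_equiv, Pi.add_def, Pi.add_def,
      hammingDist_comp (fun t (x : ZMod 2) => x + c t) fun t => add_left_injective (c t)]
    exact hdist u hu v hv fun h => huv (h ▸ rfl)

theorem Sdist_le_T_general (n d w i : ℕ) (C : Finset (Fin n → ZMod 2)) (hcode : IsCWCode n d w C)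
    (c : Fin n → ZMod 2) (hc : c ∈ C) :
    (Sdist C c (2 * i)).card ≤ T i w i (n - w) d := by
  have hsupp : Fintype.card {t // c t = 1} = w := by
    rw [Fintype.card_subtype]; exact hcode.1 c hc
  have hcompl : Fintype.card {t // ¬ c t = 1} = n - w := by
    rw [Fintype.card_subtype_compl, hsupp, Fintype.card_fin]
  let e₁ := (Fintype.equivFinOfCardEq hsupp).symm
  let e₂ := (Fintype.equivFinOfCardEq hcompl).symm
  rw [← card_image_of_injective _ (translateSplit_injective e₁ e₂)]
  exact card_le_T_of_isDCWCode (isDCWCode_image_translateSplit hcode hc e₁ e₂)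

/-- For a nonempty `(n,d,w)` constant-weight code `C` with `d` even and
`d < 2w ≤ n`, every `c ∈ C` and every `d/2 ≤ i ≤ w` satisfy
`|S_{2i}(c)| ≤ T(i,w,i,n-w,d)`. -/
theorem Sdist_le_T (n d w i : ℕ) (C : Finset (Fin n → ZMod 2)) (hC : C.Nonempty)
    (hcode : IsCWCode n d w C) (hd : Even d) (hdw : d < 2 * w) (hwn : 2 * w ≤ n)
    (c : Fin n → ZMod 2) (hc : c ∈ C) (hi : d / 2 ≤ i) (hi' : i ≤ w) :
    (Sdist C c (2 * i)).card ≤ T i w i (n - w) d :=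
  Sdist_le_T_general n d w i C hcode c hc
end

section
/- Let n, d, w satisfy d even and d < 2w ≤ n, and set H = {d/2, d/2+1, …, w}. For i and j in H, m_{i,j} = a + b, where a = i+j if i+j ≤ w and a = i+j − 2(i+j−w) if i+j > w, and b = i+j if i+j ≤ n−w and b = i+j − 2[i+j−(n−w)] if i+j > n−w. -/
lemma hone (c : Prop) [Decidable c] : ((if c then (1 : ZMod 2) else 0) = 1) ↔ c := by
  by_cases h : c <;> simp [h, show (0 : ZMod 2) ≠ 1 by decide]

lemma card_filter_val {n : ℕ} (p : ℕ → Prop) [DecidablePred p] :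
    (Finset.univ.filter (fun t : Fin n => p t.val)).card
      = ((Finset.range n).filter p).card := by
  apply Finset.card_bij (fun t _ => t.val)
  · intro a ha
    simp only [Finset.mem_filter, Finset.mem_univ, true_and] at ha
    simp [ha, a.isLt]
  · intro a _ b _ h
    exact Fin.val_injective h
  · intro b hb
    simp only [Finset.mem_filter, Finset.mem_range] at hb
    exact ⟨⟨b, hb.1⟩, by simp [hb.2], rfl⟩

lemma card_filter_Ico {n : ℕ} (a b : ℕ) :
    (Finset.univ.filter (fun t : Fin n => a ≤ t.val ∧ t.val < b)).card
      = min b n - a := by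
  rw [card_filter_val (fun t => a ≤ t ∧ t < b)]
  have h : (Finset.range n).filter (fun t => a ≤ t ∧ t < b) = Finset.Ico a (min b n) := by
    ext t; simp [Finset.mem_Ico]; omega
  rw [h, Nat.card_Ico]

lemma zmod2_ne_iff (x y : ZMod 2) : x ≠ y ↔ ((x = 1 ∧ ¬ y = 1) ∨ (¬ x = 1 ∧ y = 1)) := by
  revert x y; decide

lemma block_identity {n : ℕ} (u v : Fin n → ZMod 2) (P : Fin n → Prop) [DecidablePred P] :
    (Finset.univ.filter (fun t => P t ∧ u t ≠ v t)).card
      + 2 * (Finset.univ.filter (fun t => P t ∧ u t = 1 ∧ v t = 1)).card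
    = (Finset.univ.filter (fun t => P t ∧ u t = 1)).card
      + (Finset.univ.filter (fun t => P t ∧ v t = 1)).card := by
  set X := Finset.univ.filter (fun t => P t ∧ u t = 1) with hX
  set Y := Finset.univ.filter (fun t => P t ∧ v t = 1) with hY
  have hI : Finset.univ.filter (fun t => P t ∧ u t = 1 ∧ v t = 1) = X ∩ Y := by
    ext t; simp [hX, hY]; tauto
  have hD : Finset.univ.filter (fun t => P t ∧ u t ≠ v t) = (X ∪ Y) \ (X ∩ Y) := by
    ext t
    simp only [Finset.mem_filter, Finset.mem_univ, true_and, Finset.mem_sdiff,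
      Finset.mem_union, Finset.mem_inter, hX, hY]
    rw [zmod2_ne_iff]; tauto
  have hsub : X ∩ Y ⊆ X ∪ Y := (Finset.inter_subset_left).trans Finset.subset_union_left
  have h1 := Finset.card_union_add_card_inter X Y
  have h2 := Finset.card_le_card hsub
  rw [hI, hD, Finset.card_sdiff_of_subset hsub]
  omega

lemma block_union_bound {n : ℕ} (u v : Fin n → ZMod 2) (P : Fin n → Prop) [DecidablePred P] :
    (Finset.univ.filter (fun t => P t ∧ u t = 1)).card
      + (Finset.univ.filter (fun t => P t ∧ v t = 1)).card
    ≤ (Finset.univ.filter (fun t => P t ∧ u t = 1 ∧ v t = 1)).card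
      + (Finset.univ.filter P).card := by
  set X := Finset.univ.filter (fun t => P t ∧ u t = 1) with hX
  set Y := Finset.univ.filter (fun t => P t ∧ v t = 1) with hY
  have hI : Finset.univ.filter (fun t => P t ∧ u t = 1 ∧ v t = 1) = X ∩ Y := by
    ext t; simp [hX, hY]; tauto
  have hsub : X ∪ Y ⊆ Finset.univ.filter P := by
    intro t ht
    simp only [Finset.mem_union, Finset.mem_filter, hX, hY] at ht ⊢
    tauto
  have h1 := Finset.card_union_add_card_inter X Y
  have h2 := Finset.card_le_card hsub
  rw [hI]
  omega

lemma card_split {n : ℕ} (w : ℕ) (Q : Fin n → Prop) [DecidablePred Q] :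
    (Finset.univ.filter Q).card
      = (Finset.univ.filter (fun t => t.val < w ∧ Q t)).card
        + (Finset.univ.filter (fun t => w ≤ t.val ∧ Q t)).card := by
  rw [← Finset.card_union_of_disjoint]
  · congr 1
    ext t
    simp only [Finset.mem_filter, Finset.mem_univ, true_and, Finset.mem_union]
    by_cases h : t.val < w <;> [tauto; (have := le_of_not_gt h; tauto)]
  · rw [Finset.disjoint_left]
    intro t ht ht'
    simp only [Finset.mem_filter] at ht ht'
    omega

lemma hamming_split {n : ℕ} (w : ℕ) (u v : Fin n → ZMod 2) :
    hammingDist u v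
      = (Finset.univ.filter (fun t => t.val < w ∧ u t ≠ v t)).card
        + (Finset.univ.filter (fun t => w ≤ t.val ∧ u t ≠ v t)).card := by
  rw [hammingDist]
  exact card_split w _

def uW (n w i : ℕ) : Fin n → ZMod 2 :=
  fun t => if t.val < i ∨ (w ≤ t.val ∧ t.val < w + i) then 1 else 0

def vW (n w j : ℕ) : Fin n → ZMod 2 :=
  fun t => if (w - j ≤ t.val ∧ t.val < w) ∨ n - j ≤ t.val then 1 else 0

section counts

variable {n w i j : ℕ}

lemma cu1 (hiw : i ≤ w) (hwn : 2 * w ≤ n) :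
    (Finset.univ.filter (fun t : Fin n => t.val < w ∧ uW n w i t = 1)).card = i := by
  have e : (Finset.univ.filter (fun t : Fin n => t.val < w ∧ uW n w i t = 1))
      = Finset.univ.filter (fun t : Fin n => 0 ≤ t.val ∧ t.val < i) := by
    ext t
    simp only [Finset.mem_filter, Finset.mem_univ, true_and, uW, hone]
    omega
  rw [e, card_filter_Ico]; omega

lemma cu2 (hiw : i ≤ w) (hwn : 2 * w ≤ n) :
    (Finset.univ.filter (fun t : Fin n => w ≤ t.val ∧ uW n w i t = 1)).card = i := by
  have e : (Finset.univ.filter (fun t : Fin n => w ≤ t.val ∧ uW n w i t = 1))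
      = Finset.univ.filter (fun t : Fin n => w ≤ t.val ∧ t.val < w + i) := by
    ext t
    simp only [Finset.mem_filter, Finset.mem_univ, true_and, uW, hone]
    omega
  rw [e, card_filter_Ico]; omega

lemma cv1 (hjw : j ≤ w) (hwn : 2 * w ≤ n) :
    (Finset.univ.filter (fun t : Fin n => t.val < w ∧ vW n w j t = 1)).card = j := by
  have e : (Finset.univ.filter (fun t : Fin n => t.val < w ∧ vW n w j t = 1))
      = Finset.univ.filter (fun t : Fin n => w - j ≤ t.val ∧ t.val < w) := by
    ext t
    simp only [Finset.mem_filter, Finset.mem_univ, true_and, vW, hone]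
    omega
  rw [e, card_filter_Ico]; omega

lemma cv2 (hjw : j ≤ w) (hwn : 2 * w ≤ n) :
    (Finset.univ.filter (fun t : Fin n => w ≤ t.val ∧ vW n w j t = 1)).card = j := by
  have e : (Finset.univ.filter (fun t : Fin n => w ≤ t.val ∧ vW n w j t = 1))
      = Finset.univ.filter (fun t : Fin n => n - j ≤ t.val ∧ t.val < n) := by
    ext t
    simp only [Finset.mem_filter, Finset.mem_univ, true_and, vW, hone]
    omega
  rw [e, card_filter_Ico]; omega

lemma ck1 (hiw : i ≤ w) (hjw : j ≤ w) (hwn : 2 * w ≤ n) :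
    (Finset.univ.filter
      (fun t : Fin n => t.val < w ∧ uW n w i t = 1 ∧ vW n w j t = 1)).card = i - (w - j) := by
  have e : (Finset.univ.filter (fun t : Fin n => t.val < w ∧ uW n w i t = 1 ∧ vW n w j t = 1))
      = Finset.univ.filter (fun t : Fin n => w - j ≤ t.val ∧ t.val < i) := by
    ext t
    simp only [Finset.mem_filter, Finset.mem_univ, true_and, uW, vW, hone]
    omega
  rw [e, card_filter_Ico]; omega

lemma ck2 (hiw : i ≤ w) (hjw : j ≤ w) (hwn : 2 * w ≤ n) :
    (Finset.univ.filter
      (fun t : Fin n => w ≤ t.val ∧ uW n w i t = 1 ∧ vW n w j t = 1)).card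
        = (w + i) - (n - j) := by
  have e : (Finset.univ.filter (fun t : Fin n => w ≤ t.val ∧ uW n w i t = 1 ∧ vW n w j t = 1))
      = Finset.univ.filter (fun t : Fin n => n - j ≤ t.val ∧ t.val < w + i) := by
    ext t
    simp only [Finset.mem_filter, Finset.mem_univ, true_and, uW, vW, hone]
    omega
  rw [e, card_filter_Ico]; omega

lemma wit_dist (hiw : i ≤ w) (hjw : j ≤ w) (hwn : 2 * w ≤ n) :
    hammingDist (uW n w i) (vW n w j) =
      (if i + j ≤ w then i + j else i + j - 2 * (i + j - w)) +
      (if i + j ≤ n - w then i + j else i + j - 2 * (i + j - (n - w))) := by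
  have id1 := block_identity (uW n w i) (vW n w j) (fun t : Fin n => t.val < w)
  have id2 := block_identity (uW n w i) (vW n w j) (fun t : Fin n => w ≤ t.val)
  rw [cu1 hiw hwn, cv1 hjw hwn, ck1 hiw hjw hwn] at id1
  rw [cu2 hiw hwn, cv2 hjw hwn, ck2 hiw hjw hwn] at id2
  rw [hamming_split w]
  split_ifs <;> omega

end counts

theorem mMax_formula_aux (n d w i j : ℕ) (hdw : d < 2 * w) (hwn : 2 * w ≤ n)
    (hi : i ∈ Finset.Icc (d / 2) w) (hj : j ∈ Finset.Icc (d / 2) w) :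
    mMax n w i j =
      (if i + j ≤ w then i + j else i + j - 2 * (i + j - w)) +
      (if i + j ≤ n - w then i + j else i + j - 2 * (i + j - (n - w))) := by
  simp only [Finset.mem_Icc] at hi hj
  obtain ⟨_, hiw⟩ := hi
  obtain ⟨_, hjw⟩ := hj
  have hP1card : (Finset.univ.filter (fun t : Fin n => t.val < w)).card = w := by
    rw [card_filter_val (fun t => t < w)]
    have h : (Finset.range n).filter (fun t => t < w) = Finset.range w := by
      ext t; simp; omega
    rw [h, Finset.card_range]
  have hP2card : (Finset.univ.filter (fun t : Fin n => w ≤ t.val)).card = n - w := by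
    rw [card_filter_val (fun t => w ≤ t)]
    have h : (Finset.range n).filter (fun t => w ≤ t) = Finset.Ico w n := by
      ext t; simp [Finset.mem_Ico]; omega
    rw [h, Nat.card_Ico]
  apply le_antisymm
  · apply Finset.sup_le
    rintro ⟨u, v⟩ hp
    rw [Finset.mem_product] at hp
    obtain ⟨hu, hv⟩ := hp
    simp only [Vset, Finset.mem_filter, Finset.mem_univ, true_and] at hu hv
    obtain ⟨hu1, hu2⟩ := hu
    obtain ⟨hv1, hv2⟩ := hv
    have id1 := block_identity u v (fun t : Fin n => t.val < w)
    have id2 := block_identity u v (fun t : Fin n => w ≤ t.val)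
    have hb1 := block_union_bound u v (fun t : Fin n => t.val < w)
    have hb2 := block_union_bound u v (fun t : Fin n => w ≤ t.val)
    rw [hu1, hv1, hP1card] at hb1
    rw [hu2, hv2, hP2card] at hb2
    rw [hu1, hv1] at id1
    rw [hu2, hv2] at id2
    show hammingDist u v ≤ _
    rw [hamming_split w]
    split_ifs <;> omega
  · have hmem : (uW n w i, vW n w j) ∈ (Vset n w i) ×ˢ (Vset n w j) := by
      rw [Finset.mem_product]
      constructor <;> simp only [Vset, Finset.mem_filter, Finset.mem_univ, true_and]
      · exact ⟨cu1 hiw hwn, cu2 hiw hwn⟩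
      · exact ⟨cv1 hjw hwn, cv2 hjw hwn⟩
    have hle := Finset.le_sup (f := fun p : (Fin n → ZMod 2) × (Fin n → ZMod 2) =>
      hammingDist p.1 p.2) hmem
    show _ ≤ mMax n w i j
    rw [← wit_dist hiw hjw hwn]
    exact hle

/-- For `d` even with `d < 2w ≤ n` and `i, j ∈ H = {d/2, …, w}`,
`m_{i,j} = a + b`, where `a = i+j` if `i+j ≤ w`, `a = i+j-2(i+j-w)` otherwise, and
`b = i+j` if `i+j ≤ n-w`, `b = i+j-2(i+j-(n-w))` otherwise. -/
theorem mMax_formula (n d w i j : ℕ) (hd : Even d) (hdw : d < 2 * w) (hwn : 2 * w ≤ n)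
    (hi : i ∈ Finset.Icc (d / 2) w) (hj : j ∈ Finset.Icc (d / 2) w) :
    mMax n w i j =
      (if i + j ≤ w then i + j else i + j - 2 * (i + j - w)) +
      (if i + j ≤ n - w then i + j else i + j - 2 * (i + j - (n - w))) := by
  exact mMax_formula_aux n d w i j hdw hwn hi hj
end

section
/- Let C be a nonempty (n,d,w) constant-weight code with d even and d < 2w ≤ n, and let H = {d/2, …, w}. Suppose i ≠ j are in H with m_{i,j} = d, and let c ∈ C. If |S_{2i}(c)| ≥ 1, then |S_{2j}(c)| ≤ T(w1, n1, w2, n2, d), where w1 = |i+j−w|, n1 = i if w < i+j and n1 = w−i if w ≥ i+j, w2 = |i+j−(n−w)|, and n2 = i if n−w < i+j and n2 = (n−w)−i if n−w ≥ i+j. -/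
open Finset
open Finset

section Helpers

lemma hammingDist_filter {ι : Type*} [Fintype ι] (x y : ι → ZMod 2) :
    hammingDist x y = (univ.filter fun t => x t ≠ y t).card := rfl

lemma card_val_filter {n : ℕ} (P : ℕ → Prop) [DecidablePred P] :
    (univ.filter fun t : Fin n => P t.val).card = ((range n).filter P).card := by
  rw [← Finset.card_image_of_injective (univ.filter fun t : Fin n => P t.val) Fin.val_injective]
  congr 1
  ext x
  simp only [mem_image, mem_filter, mem_univ, true_and, mem_range]
  constructor
  · rintro ⟨t, ht, rfl⟩; exact ⟨t.isLt, ht⟩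
  · rintro ⟨hx, hP⟩; exact ⟨⟨x, hx⟩, hP, rfl⟩

lemma ite_eq_one_iff (p : Prop) [Decidable p] : (if p then (1 : ZMod 2) else 0) = 1 ↔ p := by
  split <;> simp_all

lemma ite_ne_ite_iff (p q : Prop) [Decidable p] [Decidable q] :
    ((if p then (1 : ZMod 2) else 0) ≠ if q then (1:ZMod 2) else 0) ↔ ((p ∧ ¬ q) ∨ (¬ p ∧ q)) := by
  by_cases hp : p <;> by_cases hq : q <;> simp [hp, hq]

lemma card_Ico2 (a b c d : ℕ) (h : b ≤ c) :
    ((Finset.Ico a b) ∪ (Finset.Ico c d)).card = (b - a) + (d - c) := by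
  rw [Finset.card_union_of_disjoint, Nat.card_Ico, Nat.card_Ico]
  rw [Finset.disjoint_left]; intro x hx hx'; rw [mem_Ico] at *; omega

lemma card_Ico3 (a b c d e f : ℕ) (h : b ≤ c) (h2 : d ≤ e) (h3 : c ≤ d) :
    ((Finset.Ico a b) ∪ ((Finset.Ico c d) ∪ (Finset.Ico e f))).card = (b - a) + ((d - c) + (f - e)) := by
  rw [Finset.card_union_of_disjoint, card_Ico2 _ _ _ _ h2, Nat.card_Ico]
  rw [Finset.disjoint_left]; intro x hx hx'
  simp only [mem_Ico, mem_union] at *; omega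

/-- the two-interval indicator vector -/
def vec2 (n a b a' b' : ℕ) : Fin n → ZMod 2 :=
  fun t => if (a ≤ t.val ∧ t.val < b) ∨ (a' ≤ t.val ∧ t.val < b') then 1 else 0

lemma vec2_count_lt {n : ℕ} (w' a b a' b' lo hi : ℕ)
    (hiff : ∀ x, (x < n ∧ (x < w' ∧ ((a ≤ x ∧ x < b) ∨ (a' ≤ x ∧ x < b')))) ↔ (lo ≤ x ∧ x < hi)) :
    (univ.filter fun t : Fin n => t.val < w' ∧ vec2 n a b a' b' t = 1).card = hi - lo := by
  simp only [vec2, ite_eq_one_iff]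
  rw [card_val_filter (P := fun x => x < w' ∧ ((a ≤ x ∧ x < b) ∨ (a' ≤ x ∧ x < b')))]
  rw [show (range n).filter (fun x => x < w' ∧ ((a ≤ x ∧ x < b) ∨ (a' ≤ x ∧ x < b'))) = Finset.Ico lo hi from by
    ext x; simp only [mem_filter, mem_range, mem_Ico]; exact hiff x]
  exact Nat.card_Ico lo hi

lemma vec2_count_ge {n : ℕ} (w' a b a' b' lo hi : ℕ)
    (hiff : ∀ x, (x < n ∧ (w' ≤ x ∧ ((a ≤ x ∧ x < b) ∨ (a' ≤ x ∧ x < b')))) ↔ (lo ≤ x ∧ x < hi)) :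
    (univ.filter fun t : Fin n => w' ≤ t.val ∧ vec2 n a b a' b' t = 1).card = hi - lo := by
  simp only [vec2, ite_eq_one_iff]
  rw [card_val_filter (P := fun x => w' ≤ x ∧ ((a ≤ x ∧ x < b) ∨ (a' ≤ x ∧ x < b')))]
  rw [show (range n).filter (fun x => w' ≤ x ∧ ((a ≤ x ∧ x < b) ∨ (a' ≤ x ∧ x < b'))) = Finset.Ico lo hi from by
    ext x; simp only [mem_filter, mem_range, mem_Ico]; exact hiff x]
  exact Nat.card_Ico lo hi

lemma vec2_dist {n : ℕ} (a b a' b' e f e' f' : ℕ) :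
    hammingDist (vec2 n a b a' b') (vec2 n e f e' f') =
      ((range n).filter fun x =>
        ((((a ≤ x ∧ x < b) ∨ (a' ≤ x ∧ x < b')) ∧ ¬((e ≤ x ∧ x < f) ∨ (e' ≤ x ∧ x < f'))) ∨
         (¬((a ≤ x ∧ x < b) ∨ (a' ≤ x ∧ x < b')) ∧ ((e ≤ x ∧ x < f) ∨ (e' ≤ x ∧ x < f'))))).card := by
  rw [hammingDist_filter]
  simp only [vec2, ite_ne_ite_iff]
  exact card_val_filter (P := fun x =>
        ((((a ≤ x ∧ x < b) ∨ (a' ≤ x ∧ x < b')) ∧ ¬((e ≤ x ∧ x < f) ∨ (e' ≤ x ∧ x < f'))) ∨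
         (¬((a ≤ x ∧ x < b) ∨ (a' ≤ x ∧ x < b')) ∧ ((e ≤ x ∧ x < f) ∨ (e' ≤ x ∧ x < f')))))

lemma card_sum_filter {k m : ℕ} (P : Fin k ⊕ Fin m → Prop) [DecidablePred P] :
    (univ.filter P).card =
      (univ.filter fun a : Fin k => P (Sum.inl a)).card +
      (univ.filter fun b : Fin m => P (Sum.inr b)).card := by
  rw [show (univ.filter P) =
      ((univ.filter fun a : Fin k => P (Sum.inl a)).map ⟨Sum.inl, Sum.inl_injective⟩) ∪
      ((univ.filter fun b : Fin m => P (Sum.inr b)).map ⟨Sum.inr, Sum.inr_injective⟩) from by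
    ext x; cases x <;> simp]
  rw [Finset.card_union_of_disjoint, Finset.card_map, Finset.card_map]
  rw [Finset.disjoint_left]
  rintro x hx hx'
  simp only [mem_map, Function.Embedding.coeFn_mk] at hx hx'
  obtain ⟨y, _, rfl⟩ := hx
  obtain ⟨z, _, h⟩ := hx'
  exact absurd h (by simp)

lemma card_filter_comp {k n : ℕ} (g : Fin k → Fin n) (s : Finset (Fin n))
    (hinj : Function.Injective g) (hmem : ∀ a, g a ∈ s) (hsurj : ∀ t ∈ s, ∃ a, g a = t)
    (Q : Fin n → Prop) [DecidablePred Q] :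
    (univ.filter fun a => Q (g a)).card = (s.filter Q).card := by
  apply Finset.card_bij (fun a _ => g a)
  · intro a ha; simp only [mem_filter] at *; exact ⟨hmem a, ha.2⟩
  · intro a _ b _ hab; exact hinj hab
  · intro t ht
    simp only [mem_filter] at ht
    obtain ⟨a, rfl⟩ := hsurj t ht.1
    exact ⟨a, by simp [ht.2], rfl⟩

lemma zmod2_ne_cases (a b : ZMod 2) (h : a ≠ b) : (a = 1 ∧ b = 0) ∨ (a = 0 ∧ b = 1) := by
  revert h; revert a b; decide

lemma zmod2_both_ne {x y c : ZMod 2} (hx : x ≠ c) (hy : y ≠ c) : x = y := by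
  revert hx hy; revert x y c; decide

lemma zmod2_eq_of {a b : ZMod 2} (h1 : ¬(a = 1 ∧ b = 0)) (h2 : ¬(a = 0 ∧ b = 1)) : b = a := by
  revert h1 h2; revert a b; decide

lemma zmod2_add_one_inj {x y : ZMod 2} (h : x + 1 = y + 1) : x = y := by
  revert h; revert x y; decide

lemma zmod2_add_one_eq_one (x : ZMod 2) : x + 1 = 1 ↔ x = 0 := by
  revert x; decide

end Helpers

lemma dist_le_mMax {n w i j : ℕ} {u v : Fin n → ZMod 2}
    (hu : u ∈ Vset n w i) (hv : v ∈ Vset n w j) :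
    hammingDist u v ≤ mMax n w i j :=
  Finset.le_sup (f := fun p => hammingDist p.1 p.2) (b := (u, v))
    (Finset.mem_product.mpr ⟨hu, hv⟩)

set_option maxHeartbeats 1000000

/-- For a nonempty `(n,d,w)` constant-weight code `C` (`d` even,
`d < 2w ≤ n`), `i ≠ j` in `H` with `m_{i,j} = d`, and `c ∈ C` with `|S_{2i}(c)| ≥ 1`,
one has `|S_{2j}(c)| ≤ T(w1,n1,w2,n2,d)` with `w1 = |i+j-w|`, `n1 = i` if `w < i+j`
and `w-i` otherwise, `w2 = |i+j-(n-w)|`, `n2 = i` if `n-w < i+j` and `(n-w)-i`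
otherwise. -/
theorem Sdist_cross_bound (n d w i j : ℕ) (C : Finset (Fin n → ZMod 2)) (hC : C.Nonempty)
    (hcode : IsCWCode n d w C) (hd : Even d) (hdw : d < 2 * w) (hwn : 2 * w ≤ n)
    (hi : i ∈ Finset.Icc (d / 2) w) (hj : j ∈ Finset.Icc (d / 2) w) (hij : i ≠ j)
    (hm : mMax n w i j = d)
    (c : Fin n → ZMod 2) (hc : c ∈ C) (hS : 1 ≤ (Sdist C c (2 * i)).card) :
    (Sdist C c (2 * j)).card ≤
      T (((i : ℤ) + j - (w : ℤ)).natAbs)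
        (if w < i + j then i else w - i)
        (((i : ℤ) + j - ((n - w : ℕ) : ℤ)).natAbs)
        (if n - w < i + j then i else (n - w) - i) d := by
  obtain ⟨hwt, hdmin⟩ := hcode
  simp only [Finset.mem_Icc] at hi hj
  have hdd : d / 2 + d / 2 = d := by obtain ⟨k, hk⟩ := hd; omega
  have hiw : i ≤ w := hi.2
  have hjw : j ≤ w := hj.2
  have hwn' : w ≤ n := by omega
  have hdij : d < i + j := by omega
  -- the generic vector u ∈ V_i
  have hu_mem : vec2 n 0 i w (w+i) ∈ Vset n w i := by
    unfold Vset
    rw [Finset.mem_filter]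
    refine ⟨Finset.mem_univ _, ?_, ?_⟩
    · rw [vec2_count_lt (lo := 0) (hi := i) (hiff := fun x => by omega)]; omega
    · rw [vec2_count_ge (lo := w) (hi := w + i) (hiff := fun x => by omega)]; omega
  -- Step A1
  have hA1 : n - w < i + j := by
    by_contra hcon
    push_neg at hcon
    rcases le_or_gt (i + j) w with hcase | hcase
    · -- i + j ≤ w : disjoint supports, distance 2(i+j) > d
      have hv_mem : vec2 n i (i+j) (w+i) (w+i+j) ∈ Vset n w j := by
        unfold Vset
        rw [Finset.mem_filter]
        refine ⟨Finset.mem_univ _, ?_, ?_⟩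
        · rw [vec2_count_lt (lo := i) (hi := i + j) (hiff := fun x => by omega)]; omega
        · rw [vec2_count_ge (lo := w + i) (hi := w + i + j) (hiff := fun x => by omega)]; omega
      have hle := dist_le_mMax hu_mem hv_mem
      rw [hm, vec2_dist] at hle
      rw [show ((range n).filter fun x =>
          ((((0 ≤ x ∧ x < i) ∨ (w ≤ x ∧ x < w+i)) ∧ ¬((i ≤ x ∧ x < i+j) ∨ (w+i ≤ x ∧ x < w+i+j))) ∨
           (¬((0 ≤ x ∧ x < i) ∨ (w ≤ x ∧ x < w+i)) ∧ ((i ≤ x ∧ x < i+j) ∨ (w+i ≤ x ∧ x < w+i+j))))) =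
          Finset.Ico 0 (i+j) ∪ Finset.Ico w (w+i+j) from by
        ext x; simp only [mem_filter, mem_range, mem_union, mem_Ico]; omega] at hle
      rw [card_Ico2 _ _ _ _ (by omega)] at hle
      omega
    · -- w < i + j ≤ n - w : distance 2w > d
      have hv_mem : vec2 n (w-j) w (w+i) (w+i+j) ∈ Vset n w j := by
        unfold Vset
        rw [Finset.mem_filter]
        refine ⟨Finset.mem_univ _, ?_, ?_⟩
        · rw [vec2_count_lt (lo := w - j) (hi := w) (hiff := fun x => by omega)]; omega
        · rw [vec2_count_ge (lo := w + i) (hi := w + i + j) (hiff := fun x => by omega)]; omega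
      have hle := dist_le_mMax hu_mem hv_mem
      rw [hm, vec2_dist] at hle
      rw [show ((range n).filter fun x =>
          ((((0 ≤ x ∧ x < i) ∨ (w ≤ x ∧ x < w+i)) ∧ ¬((w-j ≤ x ∧ x < w) ∨ (w+i ≤ x ∧ x < w+i+j))) ∨
           (¬((0 ≤ x ∧ x < i) ∨ (w ≤ x ∧ x < w+i)) ∧ ((w-j ≤ x ∧ x < w) ∨ (w+i ≤ x ∧ x < w+i+j))))) =
          Finset.Ico 0 (w-j) ∪ Finset.Ico i (w+i+j) from by
        ext x; simp only [mem_filter, mem_range, mem_union, mem_Ico]; omega] at hle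
      rw [card_Ico2 _ _ _ _ (by omega)] at hle
      omega
  have hA1' : w < i + j := by omega
  -- Step A2 : 2n ≤ d + 2i + 2j via extremal pair
  have hA2 : 2 * n ≤ d + 2*i + 2*j := by
    have hv_mem : vec2 n (w-j) w (n-j) n ∈ Vset n w j := by
      unfold Vset
      rw [Finset.mem_filter]
      refine ⟨Finset.mem_univ _, ?_, ?_⟩
      · rw [vec2_count_lt (lo := w - j) (hi := w) (hiff := fun x => by omega)]; omega
      · rw [vec2_count_ge (lo := n - j) (hi := n) (hiff := fun x => by omega)]; omega
    have hle := dist_le_mMax hu_mem hv_mem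
    rw [hm, vec2_dist] at hle
    rw [show ((range n).filter fun x =>
        ((((0 ≤ x ∧ x < i) ∨ (w ≤ x ∧ x < w+i)) ∧ ¬((w-j ≤ x ∧ x < w) ∨ (n-j ≤ x ∧ x < n))) ∨
         (¬((0 ≤ x ∧ x < i) ∨ (w ≤ x ∧ x < w+i)) ∧ ((w-j ≤ x ∧ x < w) ∨ (n-j ≤ x ∧ x < n))))) =
        Finset.Ico 0 (w-j) ∪ (Finset.Ico i (n-j) ∪ Finset.Ico (w+i) n) from by
      ext x; simp only [mem_filter, mem_range, mem_union, mem_Ico]; omega] at hle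
    rw [card_Ico3 _ _ _ _ _ _ (by omega) (by omega) (by omega)] at hle
    omega
  -- ===== Part B =====
  obtain ⟨u0, hu0⟩ := Finset.card_pos.mp hS
  obtain ⟨hu0C, hu0d⟩ := Finset.mem_filter.mp hu0
  have hwc : (univ.filter fun t => c t = 1).card = w := hwt c hc
  have hwu : (univ.filter fun t => u0 t = 1).card = w := hwt u0 hu0C
  have ep1 : (univ.filter fun t => c t = 1 ∧ u0 t = 0).card +
      (univ.filter fun t => c t = 1 ∧ u0 t = 1).card = w := by
    rw [← hwc]; simp only [Finset.card_filter, ← Finset.sum_add_distrib]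
    refine Finset.sum_congr rfl fun t _ => ?_
    have hpt : ∀ a b : ZMod 2, ((if a = 1 ∧ b = 0 then 1 else 0) +
        (if a = 1 ∧ b = 1 then 1 else 0) : ℕ) = if a = 1 then 1 else 0 := by decide
    exact hpt (c t) (u0 t)
  have ep2 : (univ.filter fun t => c t = 0 ∧ u0 t = 1).card +
      (univ.filter fun t => c t = 1 ∧ u0 t = 1).card = w := by
    rw [← hwu]; simp only [Finset.card_filter, ← Finset.sum_add_distrib]
    refine Finset.sum_congr rfl fun t _ => ?_
    have hpt : ∀ a b : ZMod 2, ((if a = 0 ∧ b = 1 then 1 else 0) +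
        (if a = 1 ∧ b = 1 then 1 else 0) : ℕ) = if b = 1 then 1 else 0 := by decide
    exact hpt (c t) (u0 t)
  have ep3 : (univ.filter fun t => c t = 1 ∧ u0 t = 0).card +
      (univ.filter fun t => c t = 0 ∧ u0 t = 1).card = 2 * i := by
    rw [← hu0d, hammingDist_filter]; simp only [Finset.card_filter, ← Finset.sum_add_distrib]
    refine Finset.sum_congr rfl fun t _ => ?_
    have hpt : ∀ a b : ZMod 2, ((if a = 1 ∧ b = 0 then 1 else 0) +
        (if a = 0 ∧ b = 1 then 1 else 0) : ℕ) = if b ≠ a then 1 else 0 := by decide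
    exact hpt (c t) (u0 t)
  set X1 := univ.filter (fun t => c t = 1 ∧ u0 t = 0) with hX1def
  set X2 := univ.filter (fun t => c t = 0 ∧ u0 t = 1) with hX2def
  have hX1card : X1.card = i := by omega
  have hX2card : X2.card = i := by omega
  set g1 : Fin i → Fin n := fun a => ((X1.orderIsoOfFin hX1card) a : Fin n) with hg1def
  set g2 : Fin i → Fin n := fun a => ((X2.orderIsoOfFin hX2card) a : Fin n) with hg2def
  have hg1inj : Function.Injective g1 := fun a b hab =>
    (X1.orderIsoOfFin hX1card).injective (Subtype.coe_injective hab)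
  have hg2inj : Function.Injective g2 := fun a b hab =>
    (X2.orderIsoOfFin hX2card).injective (Subtype.coe_injective hab)
  have hg1mem : ∀ a, g1 a ∈ X1 := fun a => ((X1.orderIsoOfFin hX1card) a).2
  have hg2mem : ∀ a, g2 a ∈ X2 := fun a => ((X2.orderIsoOfFin hX2card) a).2
  have hg1surj : ∀ t ∈ X1, ∃ a, g1 a = t := fun t ht =>
    ⟨(X1.orderIsoOfFin hX1card).symm ⟨t, ht⟩, by
      simp only [hg1def]
      exact congrArg Subtype.val ((X1.orderIsoOfFin hX1card).apply_symm_apply ⟨t, ht⟩)⟩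
  have hg2surj : ∀ t ∈ X2, ∃ a, g2 a = t := fun t ht =>
    ⟨(X2.orderIsoOfFin hX2card).symm ⟨t, ht⟩, by
      simp only [hg2def]
      exact congrArg Subtype.val ((X2.orderIsoOfFin hX2card).apply_symm_apply ⟨t, ht⟩)⟩
  -- no position has u0, v, c all equal
  have hEfact : ∀ v ∈ Sdist C c (2 * j), ∀ t : Fin n, u0 t ≠ c t ∨ v t ≠ c t := by
    intro v hv t
    obtain ⟨hvC, hvd⟩ := Finset.mem_filter.mp hv
    have hne : u0 ≠ v := by
      intro h; apply hij; rw [h] at hu0d; omega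
    have hd1 : d ≤ hammingDist u0 v := hdmin u0 hu0C v hvC hne
    by_contra hcontra
    push_neg at hcontra
    obtain ⟨h1, h2⟩ := hcontra
    have hsum : (∑ s : Fin n, ((if u0 s ≠ v s then 1 else 0) +
        ((if u0 s ≠ c s then 1 else 0) + (if v s ≠ c s then 1 else 0)) : ℕ)) =
        hammingDist u0 v + (hammingDist u0 c + hammingDist v c) := by
      rw [hammingDist_filter, hammingDist_filter, hammingDist_filter]
      simp only [Finset.card_filter, ← Finset.sum_add_distrib]
    have hub : ∀ s : Fin n, ((if u0 s ≠ v s then 1 else 0) +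
        ((if u0 s ≠ c s then 1 else 0) + (if v s ≠ c s then 1 else 0)) : ℕ) ≤ 2 := by
      intro s
      have hpt : ∀ a b e : ZMod 2, ((if a ≠ e then 1 else 0) +
          ((if a ≠ b then 1 else 0) + (if e ≠ b then 1 else 0)) : ℕ) ≤ 2 := by decide
      exact hpt (u0 s) (c s) (v s)
    have hzero : ((if u0 t ≠ v t then 1 else 0) +
        ((if u0 t ≠ c t then 1 else 0) + (if v t ≠ c t then 1 else 0)) : ℕ) = 0 := by
      rw [h1, h2]; simp
    have hlt : (∑ s : Fin n, ((if u0 s ≠ v s then 1 else 0) +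
        ((if u0 s ≠ c s then 1 else 0) + (if v s ≠ c s then 1 else 0)) : ℕ)) <
        ∑ _s : Fin n, 2 :=
      Finset.sum_lt_sum (fun s _ => hub s) ⟨t, Finset.mem_univ t, by rw [hzero]; omega⟩
    rw [hsum, Finset.sum_const, Finset.card_univ, Fintype.card_fin, smul_eq_mul] at hlt
    omega
  -- cell counting for each codeword at distance 2j
  have hcells : ∀ v ∈ Sdist C c (2 * j),
      (X1.filter fun t => v t = 0).card = i + j - w ∧
      (X2.filter fun t => v t = 1).card = i + j - (n - w) := by
    intro v hv
    have hE := hEfact v hv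
    obtain ⟨hvC, hvd⟩ := Finset.mem_filter.mp hv
    have hwv : (univ.filter fun t => v t = 1).card = w := hwt v hvC
    have e1 : (univ.filter fun t => c t = 1 ∧ u0 t = 0 ∧ v t = 0).card +
        ((univ.filter fun t => c t = 1 ∧ u0 t = 0 ∧ v t = 1).card +
        ((univ.filter fun t => c t = 1 ∧ u0 t = 1 ∧ v t = 0).card +
        (univ.filter fun t => c t = 1 ∧ u0 t = 1 ∧ v t = 1).card)) = w := by
      rw [← hwc]; simp only [Finset.card_filter, ← Finset.sum_add_distrib]
      refine Finset.sum_congr rfl fun t _ => ?_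
      have hpt : ∀ a b e : ZMod 2, ((if a = 1 ∧ b = 0 ∧ e = 0 then 1 else 0) +
          ((if a = 1 ∧ b = 0 ∧ e = 1 then 1 else 0) +
          ((if a = 1 ∧ b = 1 ∧ e = 0 then 1 else 0) +
          (if a = 1 ∧ b = 1 ∧ e = 1 then 1 else 0))) : ℕ) = if a = 1 then 1 else 0 := by decide
      exact hpt (c t) (u0 t) (v t)
    have e2 : (univ.filter fun t => c t = 0 ∧ u0 t = 1 ∧ v t = 0).card +
        ((univ.filter fun t => c t = 0 ∧ u0 t = 1 ∧ v t = 1).card +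
        ((univ.filter fun t => c t = 1 ∧ u0 t = 1 ∧ v t = 0).card +
        (univ.filter fun t => c t = 1 ∧ u0 t = 1 ∧ v t = 1).card)) = w := by
      rw [← hwu]; simp only [Finset.card_filter, ← Finset.sum_add_distrib]
      refine Finset.sum_congr rfl fun t _ => ?_
      have hpt : ∀ a b e : ZMod 2, ((if a = 0 ∧ b = 1 ∧ e = 0 then 1 else 0) +
          ((if a = 0 ∧ b = 1 ∧ e = 1 then 1 else 0) +
          ((if a = 1 ∧ b = 1 ∧ e = 0 then 1 else 0) +
          (if a = 1 ∧ b = 1 ∧ e = 1 then 1 else 0))) : ℕ) = if b = 1 then 1 else 0 := by decide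
      exact hpt (c t) (u0 t) (v t)
    have e3 : (univ.filter fun t => c t = 0 ∧ u0 t = 0 ∧ v t = 1).card +
        ((univ.filter fun t => c t = 0 ∧ u0 t = 1 ∧ v t = 1).card +
        ((univ.filter fun t => c t = 1 ∧ u0 t = 0 ∧ v t = 1).card +
        (univ.filter fun t => c t = 1 ∧ u0 t = 1 ∧ v t = 1).card)) = w := by
      rw [← hwv]; simp only [Finset.card_filter, ← Finset.sum_add_distrib]
      refine Finset.sum_congr rfl fun t _ => ?_
      have hpt : ∀ a b e : ZMod 2, ((if a = 0 ∧ b = 0 ∧ e = 1 then 1 else 0) +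
          ((if a = 0 ∧ b = 1 ∧ e = 1 then 1 else 0) +
          ((if a = 1 ∧ b = 0 ∧ e = 1 then 1 else 0) +
          (if a = 1 ∧ b = 1 ∧ e = 1 then 1 else 0))) : ℕ) = if e = 1 then 1 else 0 := by decide
      exact hpt (c t) (u0 t) (v t)
    have e4 : (univ.filter fun t => c t = 1 ∧ u0 t = 0 ∧ v t = 0).card +
        ((univ.filter fun t => c t = 1 ∧ u0 t = 0 ∧ v t = 1).card +
        ((univ.filter fun t => c t = 0 ∧ u0 t = 1 ∧ v t = 0).card +
        (univ.filter fun t => c t = 0 ∧ u0 t = 1 ∧ v t = 1).card)) = 2 * i := by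
      rw [← hu0d, hammingDist_filter]
      simp only [Finset.card_filter, ← Finset.sum_add_distrib]
      refine Finset.sum_congr rfl fun t _ => ?_
      have hpt : ∀ a b e : ZMod 2, ((if a = 1 ∧ b = 0 ∧ e = 0 then 1 else 0) +
          ((if a = 1 ∧ b = 0 ∧ e = 1 then 1 else 0) +
          ((if a = 0 ∧ b = 1 ∧ e = 0 then 1 else 0) +
          (if a = 0 ∧ b = 1 ∧ e = 1 then 1 else 0))) : ℕ) = if b ≠ a then 1 else 0 := by decide
      exact hpt (c t) (u0 t) (v t)
    have e5 : (univ.filter fun t => c t = 1 ∧ u0 t = 0 ∧ v t = 0).card +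
        ((univ.filter fun t => c t = 1 ∧ u0 t = 1 ∧ v t = 0).card +
        ((univ.filter fun t => c t = 0 ∧ u0 t = 0 ∧ v t = 1).card +
        (univ.filter fun t => c t = 0 ∧ u0 t = 1 ∧ v t = 1).card)) = 2 * j := by
      rw [← hvd, hammingDist_filter]
      simp only [Finset.card_filter, ← Finset.sum_add_distrib]
      refine Finset.sum_congr rfl fun t _ => ?_
      have hpt : ∀ a b e : ZMod 2, ((if a = 1 ∧ b = 0 ∧ e = 0 then 1 else 0) +
          ((if a = 1 ∧ b = 1 ∧ e = 0 then 1 else 0) +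
          ((if a = 0 ∧ b = 0 ∧ e = 1 then 1 else 0) +
          (if a = 0 ∧ b = 1 ∧ e = 1 then 1 else 0))) : ℕ) = if e ≠ a then 1 else 0 := by decide
      exact hpt (c t) (u0 t) (v t)
    have e6 : (univ.filter fun t => c t = 0 ∧ u0 t = 0 ∧ v t = 0).card +
        ((univ.filter fun t => c t = 0 ∧ u0 t = 0 ∧ v t = 1).card +
        ((univ.filter fun t => c t = 0 ∧ u0 t = 1 ∧ v t = 0).card +
        ((univ.filter fun t => c t = 0 ∧ u0 t = 1 ∧ v t = 1).card +
        ((univ.filter fun t => c t = 1 ∧ u0 t = 0 ∧ v t = 0).card +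
        ((univ.filter fun t => c t = 1 ∧ u0 t = 0 ∧ v t = 1).card +
        ((univ.filter fun t => c t = 1 ∧ u0 t = 1 ∧ v t = 0).card +
        (univ.filter fun t => c t = 1 ∧ u0 t = 1 ∧ v t = 1).card)))))) = n := by
      have hn : (∑ _t : Fin n, (1 : ℕ)) = n := by simp
      conv_rhs => rw [← hn]
      simp only [Finset.card_filter, ← Finset.sum_add_distrib]
      refine Finset.sum_congr rfl fun t _ => ?_
      have hpt : ∀ a b e : ZMod 2, ((if a = 0 ∧ b = 0 ∧ e = 0 then 1 else 0) +
          ((if a = 0 ∧ b = 0 ∧ e = 1 then 1 else 0) +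
          ((if a = 0 ∧ b = 1 ∧ e = 0 then 1 else 0) +
          ((if a = 0 ∧ b = 1 ∧ e = 1 then 1 else 0) +
          ((if a = 1 ∧ b = 0 ∧ e = 0 then 1 else 0) +
          ((if a = 1 ∧ b = 0 ∧ e = 1 then 1 else 0) +
          ((if a = 1 ∧ b = 1 ∧ e = 0 then 1 else 0) +
          (if a = 1 ∧ b = 1 ∧ e = 1 then 1 else 0))))))) : ℕ) = 1 := by decide
      exact hpt (c t) (u0 t) (v t)
    have e7 : (univ.filter fun t => c t = 1 ∧ u0 t = 1 ∧ v t = 1).card = 0 := by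
      rw [Finset.card_eq_zero, Finset.filter_eq_empty_iff]
      intro t _
      rintro ⟨h1, h2, h3⟩
      rcases hE t with h | h
      · exact h (by rw [h2, h1])
      · exact h (by rw [h3, h1])
    have e8 : (univ.filter fun t => c t = 0 ∧ u0 t = 0 ∧ v t = 0).card = 0 := by
      rw [Finset.card_eq_zero, Finset.filter_eq_empty_iff]
      intro t _
      rintro ⟨h1, h2, h3⟩
      rcases hE t with h | h
      · exact h (by rw [h2, h1])
      · exact h (by rw [h3, h1])
    have hX1f : X1.filter (fun t => v t = 0) =
        univ.filter fun t => c t = 1 ∧ u0 t = 0 ∧ v t = 0 := by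
      ext t
      simp only [hX1def, Finset.mem_filter, Finset.mem_univ, true_and, and_assoc]
    have hX2f : X2.filter (fun t => v t = 1) =
        univ.filter fun t => c t = 0 ∧ u0 t = 1 ∧ v t = 1 := by
      ext t
      simp only [hX2def, Finset.mem_filter, Finset.mem_univ, true_and, and_assoc]
    rw [hX1f, hX2f]
    constructor <;> omega
  -- the image map into the doubly-constant-weight space
  classical
  set fv : (Fin n → ZMod 2) → (Fin i ⊕ Fin i → ZMod 2) :=
    fun v => Sum.elim (fun a => v (g1 a) + 1) (fun b => v (g2 b)) with hfvdef
  have hdisjX : ∀ (Q : Fin n → Prop) (_ : DecidablePred Q),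
      Disjoint (X1.filter Q) (X2.filter Q) := by
    intro Q _
    rw [Finset.disjoint_left]
    intro x hx hx'
    rw [Finset.mem_filter, hX1def, Finset.mem_filter] at hx
    rw [Finset.mem_filter, hX2def, Finset.mem_filter] at hx'
    exact absurd (hx.1.2.1.symm.trans hx'.1.2.1) (by decide)
  have hdistf : ∀ v ∈ Sdist C c (2 * j), ∀ v' ∈ Sdist C c (2 * j),
      hammingDist (fv v) (fv v') = hammingDist v v' := by
    intro v hv v' hv'
    rw [hammingDist_filter, hammingDist_filter]
    rw [card_sum_filter (P := fun k => fv v k ≠ fv v' k)]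
    simp only [hfvdef, Sum.elim_inl, Sum.elim_inr]
    rw [show (univ.filter fun a : Fin i => v (g1 a) + 1 ≠ v' (g1 a) + 1) =
        (univ.filter fun a : Fin i => v (g1 a) ≠ v' (g1 a)) from
      Finset.filter_congr fun a _ => by
        constructor
        · intro h hh; exact h (by rw [hh])
        · intro h hh; exact h (zmod2_add_one_inj hh)]
    rw [card_filter_comp g1 X1 hg1inj hg1mem hg1surj (Q := fun t => v t ≠ v' t)]
    rw [card_filter_comp g2 X2 hg2inj hg2mem hg2surj (Q := fun t => v t ≠ v' t)]
    rw [← Finset.card_union_of_disjoint (hdisjX _ _)]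
    congr 1
    ext t
    simp only [Finset.mem_union, Finset.mem_filter, hX1def, hX2def, Finset.mem_univ, true_and]
    constructor
    · rintro (⟨_, h⟩ | ⟨_, h⟩) <;> exact h
    · intro hQ
      have hut : u0 t ≠ c t := by
        intro he
        rcases hEfact v hv t with h | h
        · exact h he
        rcases hEfact v' hv' t with h' | h'
        · exact h' he
        exact hQ (zmod2_both_ne h h')
      rcases zmod2_ne_cases (c t) (u0 t) (fun hh => hut hh.symm) with ⟨ha, hb⟩ | ⟨ha, hb⟩
      · exact Or.inl ⟨⟨ha, hb⟩, hQ⟩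
      · exact Or.inr ⟨⟨ha, hb⟩, hQ⟩
  have hinjOn : Set.InjOn fv (Sdist C c (2 * j)) := by
    intro v hv v' hv' hfe
    simp only [Finset.mem_coe] at hv hv'
    funext t
    by_cases hX1t : t ∈ X1
    · obtain ⟨a, rfl⟩ := hg1surj t hX1t
      have hcf := congrFun hfe (Sum.inl a)
      simp only [hfvdef, Sum.elim_inl] at hcf
      exact zmod2_add_one_inj hcf
    by_cases hX2t : t ∈ X2
    · obtain ⟨b, rfl⟩ := hg2surj t hX2t
      have hcf := congrFun hfe (Sum.inr b)
      simpa [hfvdef] using hcf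
    · have h1 : ¬(c t = 1 ∧ u0 t = 0) := by
        intro h; exact hX1t (by rw [hX1def, Finset.mem_filter]; exact ⟨Finset.mem_univ t, h⟩)
      have h2 : ¬(c t = 0 ∧ u0 t = 1) := by
        intro h; exact hX2t (by rw [hX2def, Finset.mem_filter]; exact ⟨Finset.mem_univ t, h⟩)
      have heq : u0 t = c t := zmod2_eq_of h1 h2
      rcases hEfact v hv t with h | h
      · exact absurd heq h
      rcases hEfact v' hv' t with h' | h'
      · exact absurd heq h'
      exact zmod2_both_ne h h'
  have hweights : ∀ v ∈ Sdist C c (2 * j),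
      (univ.filter fun a : Fin i => fv v (Sum.inl a) = 1).card = i + j - w ∧
      (univ.filter fun b : Fin i => fv v (Sum.inr b) = 1).card = i + j - (n - w) := by
    intro v hv
    obtain ⟨hc1, hc2⟩ := hcells v hv
    constructor
    · rw [show (univ.filter fun a : Fin i => fv v (Sum.inl a) = 1) =
           (univ.filter fun a : Fin i => v (g1 a) = 0) from
        Finset.filter_congr fun a _ => by
          simp only [hfvdef, Sum.elim_inl]; exact zmod2_add_one_eq_one (v (g1 a))]
      rw [card_filter_comp g1 X1 hg1inj hg1mem hg1surj (Q := fun t => v t = 0)]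
      exact hc1
    · rw [show (univ.filter fun b : Fin i => fv v (Sum.inr b) = 1) =
           (univ.filter fun b : Fin i => v (g2 b) = 1) from
        Finset.filter_congr fun b _ => by simp only [hfvdef, Sum.elim_inr]]
      rw [card_filter_comp g2 X2 hg2inj hg2mem hg2surj (Q := fun t => v t = 1)]
      exact hc2
  -- final assembly
  have hw1 : ((i : ℤ) + j - (w : ℤ)).natAbs = i + j - w := by omega
  have hw2 : ((i : ℤ) + j - ((n - w : ℕ) : ℤ)).natAbs = i + j - (n - w) := by omega
  rw [hw1, hw2, if_pos hA1', if_pos hA1]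
  set Cimg := (Sdist C c (2 * j)).image fv with hCimgdef
  have hcard : Cimg.card = (Sdist C c (2 * j)).card := Finset.card_image_of_injOn hinjOn
  have hDCW : IsDCWCode (i + j - w) i (i + j - (n - w)) i d Cimg := by
    constructor
    · intro x hx
      obtain ⟨v, hv, rfl⟩ := Finset.mem_image.mp hx
      exact hweights v hv
    · intro x hx y hy hxy
      obtain ⟨v, hv, rfl⟩ := Finset.mem_image.mp hx
      obtain ⟨v', hv', rfl⟩ := Finset.mem_image.mp hy
      have hvv' : v ≠ v' := fun h => hxy (by rw [h])
      rw [hdistf v hv v' hv']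
      exact hdmin v (Finset.mem_filter.mp hv).1 v' (Finset.mem_filter.mp hv').1 hvv'
  have hbdd : BddAbove {M | ∃ C' : Finset (Fin i ⊕ Fin i → ZMod 2),
      IsDCWCode (i + j - w) i (i + j - (n - w)) i d C' ∧ C'.card = M} := by
    refine ⟨Fintype.card (Fin i ⊕ Fin i → ZMod 2), ?_⟩
    rintro M ⟨C', _, rfl⟩
    exact Finset.card_le_univ C'
  have hmemT : (Sdist C c (2 * j)).card ∈ {M | ∃ C' : Finset (Fin i ⊕ Fin i → ZMod 2),
      IsDCWCode (i + j - w) i (i + j - (n - w)) i d C' ∧ C'.card = M} := ⟨Cimg, hDCW, hcard⟩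
  exact le_csSup hbdd hmemT
end

section
/- Let C be a nonempty (n,d,w) constant-weight code with d even and d < 2w ≤ n, and let H = {d/2, …, w}. Suppose i ≠ j are in H with m_{i,j} = d. Let P_i, P_j, P_{ij}, P_{ji} be positive integers with P_i ≥ T(i,w,i,n−w,d), P_j ≥ T(j,w,j,n−w,d), P_{ji} ≥ T(w1,n1,w2,n2,d) and P_{ij} ≥ T(w1',n1',w2',n2',d), where w1 = |i+j−w|, n1 = i if w < i+j and n1 = w−i otherwise, w2 = |i+j−(n−w)|, n2 = i if n−w < i+j and n2 = (n−w)−i otherwise, and w1', n1', w2', n2' are defined the same way with the roles of i and j interchanged. Then for each c ∈ C: (1) if P_{ij}/P_i + P_{ji}/P_j ≥ 1, then ((P_j − P_{ji})/(P_j·P_{ij}))·|S_{2i}(c)| + (1/P_j)·|S_{2j}(c)| ≤ 1; (2) if P_{ij}/P_i + P_{ji}/P_j ≥ 1, then (1/P_i)·|S_{2i}(c)| + ((P_i − P_{ij})/(P_i·P_{ji}))·|S_{2j}(c)| ≤ 1; (3) if P_{ij}/P_i + P_{ji}/P_j ≤ 1, then (1/P_i)·|S_{2i}(c)| + (1/P_j)·|S_{2j}(c)|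 ≤ 1. -/
open Finset
open scoped symmDiff

lemma ZMod.two_add_eq_one_iff (a b : ZMod 2) : a + b = 1 ↔ ¬(a = 1 ↔ b = 1) := by
  revert a b; decide

lemma ZMod.two_eq_zero_iff (a : ZMod 2) : a = 0 ↔ a ≠ 1 := by
  revert a; decide

lemma ZMod.two_ne_iff (a b : ZMod 2) : a ≠ b ↔ ¬(a = 1 ↔ b = 1) := by
  revert a b; decide

section Ones

variable {n : ℕ}

def ones (x : Fin n → ZMod 2) : Finset (Fin n) := {p | x p = 1}

@[simp] lemma mem_ones {x : Fin n → ZMod 2} {p : Fin n} : p ∈ ones x ↔ x p = 1 := by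
  simp [ones]

lemma ones_add (x y : Fin n → ZMod 2) : ones (x + y) = ones x ∆ ones y := by
  ext p; simp only [mem_ones, Pi.add_apply, ZMod.two_add_eq_one_iff, mem_symmDiff]; tauto

lemma hammingDist_eq_card_symmDiff (x y : Fin n → ZMod 2) :
    hammingDist x y = #(ones x ∆ ones y) := by
  rw [← ones_add, hammingDist]; congr 1; ext p
  simp [ZMod.two_ne_iff, ZMod.two_add_eq_one_iff]

lemma hammingDist_add_right (x y g : Fin n → ZMod 2) :
    hammingDist (x + g) (y + g) = hammingDist x y :=
  hammingDist_comp (fun p a => a + g p) fun p => add_left_injective (g p)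

/-- The paper's `V_k`, with the first `w` coordinates replaced by an arbitrary block `S`. -/
def VsetOn (S : Finset (Fin n)) (k : ℕ) : Finset (Fin n → ZMod 2) :=
  {x | #(S ∩ ones x) = k ∧ #(Sᶜ ∩ ones x) = k}

lemma mem_VsetOn {S : Finset (Fin n)} {k : ℕ} {x : Fin n → ZMod 2} :
    x ∈ VsetOn S k ↔ #(S ∩ ones x) = k ∧ #(Sᶜ ∩ ones x) = k := by
  simp [VsetOn]

lemma VsetOn_compl (S : Finset (Fin n)) (k : ℕ) : VsetOn Sᶜ k = VsetOn S k := by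
  ext x; simp only [mem_VsetOn, compl_compl, and_comm]

lemma add_mem_VsetOn_of_card_eq {u c : Fin n → ZMod 2} {k : ℕ} (hw : #(ones u) = #(ones c))
    (hd : hammingDist u c = 2 * k) : u + c ∈ VsetOn (ones c) k := by
  have hin : ones c ∩ ones (u + c) = ones c \ ones u := by
    ext p; simp only [ones_add, mem_inter, mem_symmDiff, mem_sdiff]; tauto
  have hout : (ones c)ᶜ ∩ ones (u + c) = ones u \ ones c := by
    ext p; simp only [ones_add, mem_inter, mem_compl, mem_symmDiff, mem_sdiff]; tauto
  have hsplit : #(ones u ∆ ones c) = #(ones u \ ones c) + #(ones c \ ones u) :=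
    card_union_of_disjoint disjoint_sdiff_sdiff
  have hbal := card_sdiff_comm hw
  rw [hammingDist_eq_card_symmDiff] at hd
  rw [mem_VsetOn, hin, hout]
  omega

end Ones

section Restriction

lemma card_le_T {w₁ n₁ w₂ n₂ d : ℕ} {D : Finset (Fin n₁ ⊕ Fin n₂ → ZMod 2)}
    (hD : IsDCWCode w₁ n₁ w₂ n₂ d D) : #D ≤ T w₁ n₁ w₂ n₂ d :=
  le_csSup ⟨Fintype.card _, by rintro M ⟨E, -, rfl⟩; exact card_le_univ E⟩ ⟨D, hD, rfl⟩

lemma hammingDist_comp_embedding {α β γ : Type*} [Fintype α] [Fintype β] [DecidableEq γ]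
    (ι : α ↪ β) {x y : β → γ} (h : ∀ b ∉ Set.range ι, x b = y b) :
    hammingDist (x ∘ ι) (y ∘ ι) = hammingDist x y := by
  simp only [hammingDist]
  rw [← card_map ι]
  congr 1
  ext b
  simp only [mem_map, mem_filter, mem_univ, true_and, Function.comp_apply]
  constructor
  · rintro ⟨a, ha, rfl⟩
    exact ha
  · intro hb
    obtain ⟨a, rfl⟩ : b ∈ Set.range ι := by_contra fun hr => hb (h b hr)
    exact ⟨a, hb, rfl⟩

lemma card_filter_orderEmbOfFin {α : Type*} [LinearOrder α] {B : Finset α} {k : ℕ} (h : #B = k)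
    (P : α → Prop) [DecidablePred P] :
    #{t : Fin k | P (B.orderEmbOfFin h t)} = #{p ∈ B | P p} := by
  conv_rhs => rw [← map_orderEmbOfFin_univ B h, filter_map, card_map]
  rfl

variable {n : ℕ}

theorem card_le_T_of_restrict {D : Finset (Fin n → ZMod 2)} {B₁ B₂ : Finset (Fin n)}
    {w₁ n₁ w₂ n₂ d : ℕ} (hB : Disjoint B₁ B₂) (h₁ : #B₁ = n₁) (h₂ : #B₂ = n₂) (b₁ b₂ : ZMod 2)
    (hw₁ : ∀ x ∈ D, #{p ∈ B₁ | x p + b₁ = 1} = w₁)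
    (hw₂ : ∀ x ∈ D, #{p ∈ B₂ | x p + b₂ = 1} = w₂)
    (hout : ∀ x ∈ D, ∀ x' ∈ D, ∀ p, p ∉ B₁ → p ∉ B₂ → x p = x' p)
    (hd : ∀ x ∈ D, ∀ x' ∈ D, x ≠ x' → d ≤ hammingDist x x') :
    #D ≤ T w₁ n₁ w₂ n₂ d := by
  let ι₁ := B₁.orderEmbOfFin h₁
  let ι₂ := B₂.orderEmbOfFin h₂
  let ι : Fin n₁ ⊕ Fin n₂ ↪ Fin n :=
    ⟨Sum.elim ι₁ ι₂, ι₁.injective.sumElim ι₂.injective fun a b hab =>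
      disjoint_left.mp hB (B₁.orderEmbOfFin_mem h₁ a) (hab ▸ B₂.orderEmbOfFin_mem h₂ b)⟩
  let bit : Fin n₁ ⊕ Fin n₂ → ZMod 2 := Sum.elim (fun _ => b₁) (fun _ => b₂)
  let Φ : (Fin n → ZMod 2) → (Fin n₁ ⊕ Fin n₂ → ZMod 2) := fun x t => x (ι t) + bit t
  have hΦ : ∀ x ∈ D, ∀ x' ∈ D, hammingDist (Φ x) (Φ x') = hammingDist x x' := by
    intro x hx x' hx'
    refine (hammingDist_comp (fun t a => a + bit t) fun t => add_left_injective _).trans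
      (hammingDist_comp_embedding ι fun p hp => hout x hx x' hx' p ?_ ?_)
    · rw [← mem_coe, ← B₁.range_orderEmbOfFin h₁]
      exact fun ⟨t, ht⟩ => hp ⟨Sum.inl t, ht⟩
    · rw [← mem_coe, ← B₂.range_orderEmbOfFin h₂]
      exact fun ⟨t, ht⟩ => hp ⟨Sum.inr t, ht⟩
  have hinj : Set.InjOn Φ D := fun x hx x' hx' h =>
    hammingDist_eq_zero.mp (by rw [← hΦ x hx x' hx', h, hammingDist_self])
  rw [← card_image_of_injOn hinj]
  refine card_le_T ⟨?_, ?_⟩ <;> simp only [forall_mem_image]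
  · exact fun x hx => ⟨(card_filter_orderEmbOfFin h₁ _).trans (hw₁ x hx),
      (card_filter_orderEmbOfFin h₂ _).trans (hw₂ x hx)⟩
  · intro x hx x' hx' hne
    rw [hΦ x hx x' hx']
    exact hd x hx x' hx' fun h => hne (h ▸ rfl)

end Restriction

section MaxDistance

variable {n : ℕ}

lemma mMax_comm (w i j : ℕ) : mMax n w i j = mMax n w j i := by
  rw [mMax, ← map_swap_product, sup_map]
  simp [mMax, Function.comp_def, hammingDist_comm]

lemma Vset_eq_VsetOn (w k : ℕ) : Vset n w k = VsetOn {p : Fin n | (p : ℕ) < w} k := by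
  ext x
  have h₁ : ({t | (t : ℕ) < w ∧ x t = 1} : Finset (Fin n)) =
      ({p | (p : ℕ) < w} : Finset (Fin n)) ∩ ones x := by
    ext; simp
  have h₂ : ({t | w ≤ (t : ℕ) ∧ x t = 1} : Finset (Fin n)) =
      ({p | (p : ℕ) < w} : Finset (Fin n))ᶜ ∩ ones x := by
    ext; simp
  simp only [Vset, mem_filter, mem_univ, true_and, mem_VsetOn, h₁, h₂]

lemma comp_symm_mem_VsetOn {S F : Finset (Fin n)} {σ : Equiv.Perm (Fin n)}
    (hσ : S.map σ.toEmbedding = F) {x : Fin n → ZMod 2} {k : ℕ} (hx : x ∈ VsetOn S k) :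
    x ∘ σ.symm ∈ VsetOn F k := by
  have hσF : ∀ p, σ p ∈ F ↔ p ∈ S := by simp [← hσ]
  rw [mem_VsetOn] at hx ⊢
  constructor
  · rw [← hx.1]
    exact (card_equiv σ fun p => by simp [hσF]).symm
  · rw [← hx.2]
    exact (card_equiv σ fun p => by simp [hσF]).symm

lemma hammingDist_le_mMax {S : Finset (Fin n)} {w i j : ℕ} (hS : #S = w)
    {x z : Fin n → ZMod 2} (hx : x ∈ VsetOn S i) (hz : z ∈ VsetOn S j) :
    hammingDist x z ≤ mMax n w i j := by
  have hwn : w ≤ n := hS ▸ card_le_univ S |>.trans_eq (Fintype.card_fin n)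
  obtain ⟨σ, hσ⟩ := Equiv.Perm.exists_map_finset_eq S {p : Fin n | (p : ℕ) < w}
    (by rw [hS, Fin.card_filter_val_lt, min_eq_right hwn])
  rw [← hammingDist_comp_embedding σ.symm.toEmbedding (by simp)]
  refine le_sup (f := fun p : (Fin n → ZMod 2) × (Fin n → ZMod 2) => hammingDist p.1 p.2)
    (b := (x ∘ σ.symm, z ∘ σ.symm)) (mem_product.mpr ⟨?_, ?_⟩) <;> rw [Vset_eq_VsetOn]
  exacts [comp_symm_mem_VsetOn hσ hx, comp_symm_mem_VsetOn hσ hz]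

end MaxDistance

section Exchange

variable {n : ℕ}

lemma ones_add_single_of_eq_zero {a : Fin n → ZMod 2} {q : Fin n} (h : a q = 0) :
    ones (a + Pi.single q 1) = insert q (ones a) := by
  ext p
  by_cases hp : p = q
  · subst hp; simp [h]
  · simp [hp]

lemma ones_add_single_of_eq_one {a : Fin n → ZMod 2} {q : Fin n} (h : a q = 1) :
    ones (a + Pi.single q 1) = (ones a).erase q := by
  ext p
  by_cases hp : p = q
  · subst hp; simp [h]
  · simp [hp]

lemma inter_ones_eq_empty_or_subset_of_isMax {S : Finset (Fin n)} {x y : Fin n → ZMod 2}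
    (hmax : ∀ z, #(S ∩ ones z) = #(S ∩ ones y) → (∀ p ∉ S, z p = y p) →
      hammingDist x z ≤ hammingDist x y) :
    S ∩ ones x ∩ ones y = ∅ ∨ S ⊆ ones x ∪ ones y := by
  by_contra! h
  obtain ⟨⟨q, hq⟩, r, hrS, hr⟩ := And.imp_right not_subset.mp h
  simp only [mem_inter, mem_ones] at hq
  obtain ⟨⟨hqS, hxq⟩, hyq⟩ := hq
  simp only [mem_union, mem_ones, not_or, ← ZMod.two_eq_zero_iff] at hr
  obtain ⟨hxr, hyr⟩ := hr
  have hqr : q ≠ r := by rintro rfl; simp [hxq] at hxr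
  have h11 : (1 : ZMod 2) + 1 = 0 := rfl
  -- `z` moves a common one of `x` and `y` to a common zero of theirs.
  let z := y + Pi.single q 1 + Pi.single r 1
  have hz : ones z = insert r ((ones y).erase q) := by
    rw [ones_add_single_of_eq_zero (by simpa [Ne.symm hqr] using hyr),
      ones_add_single_of_eq_one hyq]
  have hxz : ones (x + z) = insert r (insert q (ones (x + y))) := by
    have : x + z = x + y + Pi.single q 1 + Pi.single r 1 := by simp only [z, add_assoc]
    rw [this, ones_add_single_of_eq_zero, ones_add_single_of_eq_zero]
    · simp [hxq, hyq, h11]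
    · simp [Ne.symm hqr, hxr, hyr]
  have hq' : q ∉ ones (x + y) := by simp [hxq, hyq, h11]
  have hr' : r ∉ insert q (ones (x + y)) := by simp [Ne.symm hqr, hxr, hyr]
  have hqSy : q ∈ S ∩ ones y := by simp [hqS, hyq]
  have key := hmax z ?_ ?_
  · rw [hammingDist_eq_card_symmDiff, hammingDist_eq_card_symmDiff, ← ones_add, ← ones_add,
      hxz, card_insert_of_notMem hr', card_insert_of_notMem hq'] at key
    omega
  · rw [hz, inter_insert_of_mem hrS, inter_erase, card_insert_of_notMem (by simp [hyr]),
      card_erase_of_mem hqSy]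
    have := card_pos.mpr ⟨q, hqSy⟩
    omega
  · intro p hp
    have hpq : p ≠ q := by rintro rfl; exact hp hqS
    have hpr : p ≠ r := by rintro rfl; exact hp hrS
    simp [z, hpq, hpr]

lemma inter_ones_eq_empty_or_subset_of_isMaxOn {S : Finset (Fin n)} {x y : Fin n → ZMod 2}
    {j : ℕ} (hy : y ∈ VsetOn S j) (hmax : ∀ z ∈ VsetOn S j, hammingDist x z ≤ hammingDist x y) :
    S ∩ ones x ∩ ones y = ∅ ∨ S ⊆ ones x ∪ ones y := by
  refine inter_ones_eq_empty_or_subset_of_isMax fun z hzS hzy => hmax z ?_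
  have hout : Sᶜ ∩ ones z = Sᶜ ∩ ones y := by
    ext p
    simp only [mem_inter, mem_compl, mem_ones]
    exact and_congr_right fun hp => by rw [hzy p hp]
  rw [mem_VsetOn] at hy ⊢
  rw [hzS, hout]
  exact hy

end Exchange

section Block

variable {n : ℕ}

lemma card_inter_inter_add_card_of_subset_union {α : Type*} [DecidableEq α]
    {K X Y : Finset α} (h : K ⊆ X ∪ Y) : #(K ∩ X ∩ Y) + #K = #(K ∩ X) + #(K ∩ Y) := by
  rw [← card_union_add_card_inter (K ∩ X), ← inter_union_distrib_left, inter_eq_left.mpr h,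
    ← inter_inter_distrib_left, ← inter_assoc, add_comm]

lemma card_inter_add_card_inter_le {α : Type*} [DecidableEq α] {K X Y : Finset α}
    (h : K ∩ X ∩ Y = ∅) : #(K ∩ X) + #(K ∩ Y) ≤ #K := by
  rw [← card_union_add_card_inter (K ∩ X), ← inter_inter_distrib_left, ← inter_assoc, h,
    card_empty, add_zero]
  exact card_le_card (union_subset inter_subset_left inter_subset_left)

lemma exists_subblock {K : Finset (Fin n)} {y : Fin n → ZMod 2} {W i j : ℕ} (hK : #K = W)
    (hy : #(K ∩ ones y) = j) :
    ∃ B ⊆ K, #B = (if W < j + i then j else W - j) ∧ ∃ b : ZMod 2, ∀ x : Fin n → ZMod 2,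
      #(K ∩ ones x) = i → (K ∩ ones x ∩ ones y = ∅ ∨ K ⊆ ones x ∪ ones y) →
      #{p ∈ B | x p + b = 1} = ((j : ℤ) + i - W).natAbs ∧ ∀ p ∈ K, p ∉ B → x p = b + 1 := by
  -- Supports covering `K` force `x = 1` off `supp y`; disjoint supports force `x = 0` on it.
  split_ifs with h
  · refine ⟨K ∩ ones y, inter_subset_left, hy, 0, fun x hx hxy => ?_⟩
    have hcov : K ⊆ ones x ∪ ones y := hxy.resolve_left fun h0 => by
      have := card_inter_add_card_inter_le h0; omega
    have hB : {p ∈ K ∩ ones y | x p + 0 = 1} = K ∩ ones x ∩ ones y := by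
      ext; simp only [mem_filter, mem_inter, mem_ones, add_zero]; tauto
    refine ⟨?_, fun p hpK hpB => ?_⟩
    · have := card_inter_inter_add_card_of_subset_union hcov
      rw [hB]; omega
    · have := hcov hpK
      simp only [mem_union, mem_ones, mem_inter, not_and] at this hpB
      simp only [zero_add]; tauto
  · refine ⟨K \ ones y, sdiff_subset, by rw [card_sdiff, inter_comm, hy, hK], 1,
      fun x hx hxy => ?_⟩
    have hdisj : ∀ p ∈ K, x p = 1 → y p ≠ 1 := by
      have : K ∩ ones x ∩ ones y = ∅ := hxy.elim id fun hcov => card_eq_zero.mp <| by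
        have := card_inter_inter_add_card_of_subset_union hcov; omega
      exact fun p hpK hxp hyp => notMem_empty p (this ▸ by simp [hpK, hxp, hyp])
    have hXB : ones x ∩ (K \ ones y) = K ∩ ones x := by
      ext p; simp only [mem_inter, mem_sdiff, mem_ones]
      exact ⟨fun h => ⟨h.2.1, h.1⟩, fun h => ⟨h.2, h.1, hdisj p h.1 h.2⟩⟩
    have hB : {p ∈ K \ ones y | x p + 1 = 1} = (K \ ones y) \ ones x := by
      ext p; simp only [mem_filter, mem_sdiff, mem_ones, add_eq_right, ZMod.two_eq_zero_iff]
    refine ⟨?_, fun p hpK hpB => ?_⟩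
    · rw [hB, card_sdiff, hXB, hx, card_sdiff, inter_comm, hy, hK]; omega
    · simp only [mem_sdiff, mem_ones, not_and, not_not] at hpB
      rw [(ZMod.two_eq_zero_iff _).mpr fun hxp => hdisj p hpK hxp (hpB hpK)]
      rfl

end Block

section Code

variable {n d w i j : ℕ} {C : Finset (Fin n → ZMod 2)} {c : Fin n → ZMod 2}

lemma add_mem_VsetOn_of_mem_Sdist (hcode : IsCWCode n d w C) (hc : c ∈ C)
    {u : Fin n → ZMod 2} {k : ℕ} (hu : u ∈ Sdist C c (2 * k)) : u + c ∈ VsetOn (ones c) k :=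
  add_mem_VsetOn_of_card_eq ((hcode.1 u (mem_filter.mp hu).1).trans (hcode.1 c hc).symm)
    (mem_filter.mp hu).2

lemma le_hammingDist_add_right (hcode : IsCWCode n d w C) {u u' : Fin n → ZMod 2}
    (hu : u ∈ C) (hu' : u' ∈ C) (h : u + c ≠ u' + c) : d ≤ hammingDist (u + c) (u' + c) := by
  rw [hammingDist_add_right]
  exact hcode.2 u hu u' hu' fun e => h (e ▸ rfl)

lemma card_compl_ones (hcode : IsCWCode n d w C) (hc : c ∈ C) : #(ones c)ᶜ = n - w := by
  rw [card_compl, Fintype.card_fin]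
  exact congrArg (n - ·) (hcode.1 c hc)

theorem card_Sdist_le_T (hcode : IsCWCode n d w C) (hc : c ∈ C) (k : ℕ) :
    #(Sdist C c (2 * k)) ≤ T k w k (n - w) d := by
  have hzero : ∀ (B : Finset (Fin n)) (x : Fin n → ZMod 2), {p ∈ B | x p + 0 = 1} = B ∩ ones x :=
    fun B x => by ext; simp
  rw [← card_image_of_injective _ (add_left_injective c)]
  refine card_le_T_of_restrict disjoint_compl_right (hcode.1 c hc) (card_compl_ones hcode hc)
    0 0 ?_ ?_ ?_ ?_ <;> simp only [forall_mem_image]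
  · exact fun u hu => by
      rw [hzero]; exact (mem_VsetOn.mp (add_mem_VsetOn_of_mem_Sdist hcode hc hu)).1
  · exact fun u hu => by
      rw [hzero]; exact (mem_VsetOn.mp (add_mem_VsetOn_of_mem_Sdist hcode hc hu)).2
  · exact fun _ _ _ _ p h₁ h₂ => absurd (mem_compl.mpr h₁) h₂
  · exact fun u hu u' hu' => le_hammingDist_add_right hcode (mem_filter.mp hu).1
      (mem_filter.mp hu').1

lemma inter_ones_eq_empty_or_subset_of_mem_Sdist (hcode : IsCWCode n d w C) (hc : c ∈ C)
    (hij : i ≠ j) (hm : mMax n w i j = d) {u v : Fin n → ZMod 2}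
    (hu : u ∈ Sdist C c (2 * i)) (hv : v ∈ Sdist C c (2 * j)) {K : Finset (Fin n)}
    (hK : K = ones c ∨ K = (ones c)ᶜ) :
    K ∩ ones (u + c) ∩ ones (v + c) = ∅ ∨ K ⊆ ones (u + c) ∪ ones (v + c) := by
  have hx := add_mem_VsetOn_of_mem_Sdist hcode hc hu
  have hy := add_mem_VsetOn_of_mem_Sdist hcode hc hv
  have huv : u + c ≠ v + c := fun h => hij <| by
    have := (mem_filter.mp hu).2
    rw [add_left_injective c h, (mem_filter.mp hv).2] at this
    omega
  have hmax : ∀ z ∈ VsetOn (ones c) j, hammingDist (u + c) z ≤ hammingDist (u + c) (v + c) :=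
    fun z hz => (hammingDist_le_mMax (hcode.1 c hc) hx hz).trans
      (hm ▸ le_hammingDist_add_right hcode (mem_filter.mp hu).1 (mem_filter.mp hv).1 huv)
  rcases hK with rfl | rfl
  · exact inter_ones_eq_empty_or_subset_of_isMaxOn hy hmax
  · rw [← VsetOn_compl] at hy hmax
    exact inter_ones_eq_empty_or_subset_of_isMaxOn hy hmax

theorem card_Sdist_le_T_of_mem_Sdist (hcode : IsCWCode n d w C) (hc : c ∈ C) (hij : i ≠ j)
    (hm : mMax n w i j = d) {v : Fin n → ZMod 2} (hv : v ∈ Sdist C c (2 * j)) :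
    #(Sdist C c (2 * i)) ≤
      T (((j : ℤ) + i - (w : ℤ)).natAbs) (if w < j + i then j else w - j)
        (((j : ℤ) + i - ((n - w : ℕ) : ℤ)).natAbs)
        (if n - w < j + i then j else (n - w) - j) d := by
  have hy := mem_VsetOn.mp (add_mem_VsetOn_of_mem_Sdist hcode hc hv)
  obtain ⟨B₁, hB₁S, hB₁, b₁, hb₁⟩ := exists_subblock (i := i) (hcode.1 c hc) hy.1
  obtain ⟨B₂, hB₂S, hB₂, b₂, hb₂⟩ := exists_subblock (i := i) (card_compl_ones hcode hc) hy.2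
  have h₁ := fun u (hu : u ∈ Sdist C c (2 * i)) =>
    hb₁ (u + c) (mem_VsetOn.mp (add_mem_VsetOn_of_mem_Sdist hcode hc hu)).1
      (inter_ones_eq_empty_or_subset_of_mem_Sdist hcode hc hij hm hu hv (Or.inl rfl))
  have h₂ := fun u (hu : u ∈ Sdist C c (2 * i)) =>
    hb₂ (u + c) (mem_VsetOn.mp (add_mem_VsetOn_of_mem_Sdist hcode hc hu)).2
      (inter_ones_eq_empty_or_subset_of_mem_Sdist hcode hc hij hm hu hv (Or.inr rfl))
  rw [← card_image_of_injective _ (add_left_injective c)]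
  refine card_le_T_of_restrict (disjoint_of_subset_left hB₁S
    (disjoint_of_subset_right hB₂S disjoint_compl_right)) hB₁ hB₂ b₁ b₂ ?_ ?_ ?_ ?_ <;>
    simp only [forall_mem_image]
  · exact fun u hu => (h₁ u hu).1
  · exact fun u hu => (h₂ u hu).1
  · intro u hu u' hu' p hp₁ hp₂
    by_cases hpS : p ∈ ones c
    · rw [(h₁ u hu).2 p hpS hp₁, (h₁ u' hu').2 p hpS hp₁]
    · rw [(h₂ u hu).2 p (mem_compl.mpr hpS) hp₂, (h₂ u' hu').2 p (mem_compl.mpr hpS) hp₂]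
  · exact fun u hu u' hu' => le_hammingDist_add_right hcode (mem_filter.mp hu).1
      (mem_filter.mp hu').1

end Code

section Arithmetic

variable {K : Type*} [Field K] [LinearOrder K] [IsStrictOrderedRing K]
  {a b Pi Pj Pij Pji : K}

lemma weighted_sum_le_one_of_one_le (hPi : 0 < Pi) (hPj : 0 < Pj) (hPij : 0 < Pij)
    (ha : 0 ≤ a) (hb : 0 ≤ b) (haPi : a ≤ Pi) (hbPj : b ≤ Pj)
    (hab : 0 < b → a ≤ Pij) (hba : 0 < a → b ≤ Pji) (h : 1 ≤ Pij / Pi + Pji / Pj) :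
    (Pj - Pji) / (Pj * Pij) * a + 1 / Pj * b ≤ 1 := by
  rw [div_add_div _ _ hPi.ne' hPj.ne', le_div_iff₀ (by positivity), one_mul] at h
  have key : (Pj - Pji) * a + Pij * b ≤ Pj * Pij := by
    rcases ha.eq_or_lt with rfl | ha'
    · nlinarith
    rcases hb.eq_or_lt with rfl | hb'
    · rcases le_total Pj Pji with hle | hle
      · nlinarith
      · nlinarith [mul_le_mul_of_nonneg_left haPi (sub_nonneg.mpr hle)]
    · rcases le_total Pj Pji with hle | hle
      · nlinarith [hab hb']
      · nlinarith [mul_le_mul_of_nonneg_left (hab hb') (sub_nonneg.mpr hle), hba ha']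
  calc (Pj - Pji) / (Pj * Pij) * a + 1 / Pj * b = ((Pj - Pji) * a + Pij * b) / (Pj * Pij) := by
        field_simp
    _ ≤ 1 := div_le_one_of_le₀ key (by positivity)

lemma weighted_sum_le_one_of_le_one (hPi : 0 < Pi) (hPj : 0 < Pj)
    (ha : 0 ≤ a) (hb : 0 ≤ b) (haPi : a ≤ Pi) (hbPj : b ≤ Pj)
    (hab : 0 < b → a ≤ Pij) (hba : 0 < a → b ≤ Pji) (h : Pij / Pi + Pji / Pj ≤ 1) :
    1 / Pi * a + 1 / Pj * b ≤ 1 := by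
  rw [div_add_div _ _ hPi.ne' hPj.ne', div_le_one (by positivity)] at h
  have key : Pj * a + Pi * b ≤ Pi * Pj := by
    rcases ha.eq_or_lt with rfl | ha'
    · nlinarith
    rcases hb.eq_or_lt with rfl | hb'
    · nlinarith
    · nlinarith [hab hb', hba ha']
  calc 1 / Pi * a + 1 / Pj * b = (Pj * a + Pi * b) / (Pi * Pj) := by field_simp
    _ ≤ 1 := div_le_one_of_le₀ key (by positivity)

end Arithmetic

theorem Sdist_equality_case_general (n d w i j : ℕ) (C : Finset (Fin n → ZMod 2))
    (hcode : IsCWCode n d w C) (hij : i ≠ j)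
    (hm : mMax n w i j = d)
    (Pi Pj Pij Pji : ℤ) (hPi0 : 0 < Pi) (hPj0 : 0 < Pj) (hPij0 : 0 < Pij) (hPji0 : 0 < Pji)
    (hPi : (T i w i (n - w) d : ℤ) ≤ Pi) (hPj : (T j w j (n - w) d : ℤ) ≤ Pj)
    (hPji : (T (((i : ℤ) + j - (w : ℤ)).natAbs)
        (if w < i + j then i else w - i)
        (((i : ℤ) + j - ((n - w : ℕ) : ℤ)).natAbs)
        (if n - w < i + j then i else (n - w) - i) d : ℤ) ≤ Pji)
    (hPij : (T (((j : ℤ) + i - (w : ℤ)).natAbs)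
        (if w < j + i then j else w - j)
        (((j : ℤ) + i - ((n - w : ℕ) : ℤ)).natAbs)
        (if n - w < j + i then j else (n - w) - j) d : ℤ) ≤ Pij)
    (c : Fin n → ZMod 2) (hc : c ∈ C) :
    ((1 : ℚ) ≤ (Pij : ℚ) / (Pi : ℚ) + (Pji : ℚ) / (Pj : ℚ) →
      (((Pj : ℚ) - (Pji : ℚ)) / ((Pj : ℚ) * (Pij : ℚ))) * ((Sdist C c (2 * i)).card : ℚ) +
        (1 / (Pj : ℚ)) * ((Sdist C c (2 * j)).card : ℚ) ≤ 1) ∧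
    ((1 : ℚ) ≤ (Pij : ℚ) / (Pi : ℚ) + (Pji : ℚ) / (Pj : ℚ) →
      (1 / (Pi : ℚ)) * ((Sdist C c (2 * i)).card : ℚ) +
        (((Pi : ℚ) - (Pij : ℚ)) / ((Pi : ℚ) * (Pji : ℚ))) * ((Sdist C c (2 * j)).card : ℚ) ≤ 1) ∧
    ((Pij : ℚ) / (Pi : ℚ) + (Pji : ℚ) / (Pj : ℚ) ≤ 1 →
      (1 / (Pi : ℚ)) * ((Sdist C c (2 * i)).card : ℚ) +
        (1 / (Pj : ℚ)) * ((Sdist C c (2 * j)).card : ℚ) ≤ 1) := by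
  have hji : mMax n w j i = d := mMax_comm w i j ▸ hm
  have cast_le {m t : ℕ} {P : ℤ} (h : m ≤ t) (hP : (t : ℤ) ≤ P) : (m : ℚ) ≤ P := by
    exact_mod_cast (Int.ofNat_le.mpr h).trans hP
  have hSi := cast_le (card_Sdist_le_T hcode hc i) hPi
  have hSj := cast_le (card_Sdist_le_T hcode hc j) hPj
  have hSij : 0 < (#(Sdist C c (2 * j)) : ℚ) → (#(Sdist C c (2 * i)) : ℚ) ≤ Pij := fun h =>
    have ⟨_, hv⟩ := card_pos.mp (Nat.cast_pos.mp h)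
    cast_le (card_Sdist_le_T_of_mem_Sdist hcode hc hij hm hv) hPij
  have hSji : 0 < (#(Sdist C c (2 * i)) : ℚ) → (#(Sdist C c (2 * j)) : ℚ) ≤ Pji := fun h =>
    have ⟨_, hu⟩ := card_pos.mp (Nat.cast_pos.mp h)
    cast_le (card_Sdist_le_T_of_mem_Sdist hcode hc hij.symm hji hu) hPji
  have hPi0' : (0 : ℚ) < Pi := Int.cast_pos.mpr hPi0
  have hPj0' : (0 : ℚ) < Pj := Int.cast_pos.mpr hPj0
  refine ⟨fun h => ?_, fun h => ?_, fun h => ?_⟩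
  · exact weighted_sum_le_one_of_one_le hPi0' hPj0' (Int.cast_pos.mpr hPij0)
      (Nat.cast_nonneg _) (Nat.cast_nonneg _) hSi hSj hSij hSji h
  · rw [add_comm] at h ⊢
    exact weighted_sum_le_one_of_one_le hPj0' hPi0' (Int.cast_pos.mpr hPji0)
      (Nat.cast_nonneg _) (Nat.cast_nonneg _) hSj hSi hSji hSij h
  · exact weighted_sum_le_one_of_le_one hPi0' hPj0' (Nat.cast_nonneg _) (Nat.cast_nonneg _)
      hSi hSj hSij hSji h

/-- For a nonempty `(n,d,w)` constant-weight code `C` (`d` even,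
`d < 2w ≤ n`), `i ≠ j` in `H` with `m_{i,j} = d`, and positive integers
`P_i, P_j, P_{ij}, P_{ji}` as described, every `c ∈ C` satisfies the three
conditional inequalities. -/
theorem Sdist_equality_case (n d w i j : ℕ) (C : Finset (Fin n → ZMod 2)) (hC : C.Nonempty)
    (hcode : IsCWCode n d w C) (hd : Even d) (hdw : d < 2 * w) (hwn : 2 * w ≤ n)
    (hi : i ∈ Finset.Icc (d / 2) w) (hj : j ∈ Finset.Icc (d / 2) w) (hij : i ≠ j)
    (hm : mMax n w i j = d)
    (Pi Pj Pij Pji : ℤ) (hPi0 : 0 < Pi) (hPj0 : 0 < Pj) (hPij0 : 0 < Pij) (hPji0 : 0 < Pji)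
    (hPi : (T i w i (n - w) d : ℤ) ≤ Pi) (hPj : (T j w j (n - w) d : ℤ) ≤ Pj)
    (hPji : (T (((i : ℤ) + j - (w : ℤ)).natAbs)
        (if w < i + j then i else w - i)
        (((i : ℤ) + j - ((n - w : ℕ) : ℤ)).natAbs)
        (if n - w < i + j then i else (n - w) - i) d : ℤ) ≤ Pji)
    (hPij : (T (((j : ℤ) + i - (w : ℤ)).natAbs)
        (if w < j + i then j else w - j)
        (((j : ℤ) + i - ((n - w : ℕ) : ℤ)).natAbs)
        (if n - w < j + i then j else (n - w) - j) d : ℤ) ≤ Pij)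
    (c : Fin n → ZMod 2) (hc : c ∈ C) :
    ((1 : ℚ) ≤ (Pij : ℚ) / (Pi : ℚ) + (Pji : ℚ) / (Pj : ℚ) →
      (((Pj : ℚ) - (Pji : ℚ)) / ((Pj : ℚ) * (Pij : ℚ))) * ((Sdist C c (2 * i)).card : ℚ) +
        (1 / (Pj : ℚ)) * ((Sdist C c (2 * j)).card : ℚ) ≤ 1) ∧
    ((1 : ℚ) ≤ (Pij : ℚ) / (Pi : ℚ) + (Pji : ℚ) / (Pj : ℚ) →
      (1 / (Pi : ℚ)) * ((Sdist C c (2 * i)).card : ℚ) +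
        (((Pi : ℚ) - (Pij : ℚ)) / ((Pi : ℚ) * (Pji : ℚ))) * ((Sdist C c (2 * j)).card : ℚ) ≤ 1) ∧
    ((Pij : ℚ) / (Pi : ℚ) + (Pji : ℚ) / (Pj : ℚ) ≤ 1 →
      (1 / (Pi : ℚ)) * ((Sdist C c (2 * i)).card : ℚ) +
        (1 / (Pj : ℚ)) * ((Sdist C c (2 * j)).card : ℚ) ≤ 1) :=
  Sdist_equality_case_general n d w i j C hcode hij hm Pi Pj Pij Pji hPi0 hPj0 hPij0 hPji0 hPi hPj
    hPji hPij c hc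
end
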